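/- arXiv:2509.08537 — 3 statements merged into one kernel-verified Lean document; each statement's English description precedes it below -/
import Mathlib

section
/- Existence and uniqueness of the time reconstruction: for every integer q ≥ 2, every H-valued polynomial V of degree at most q, and every j ∈ H, there exists a unique H-valued polynomial Û of degree at most q+1 such that (i) ∫_I ⟨Û''(t) − V''(t), W(t)⟩_H dt = ⟨j, W(t₀)⟩_H for every H-valued polynomial W of degree at most q−1, (ii) Û(t₀) = V(t₀), and (iii) Û'(t₀) = V'(t₀) − j. -/
open scoped RealInnerProductSpace
open MeasureTheory

/-- Evaluation of the `H`-valued polynomial with coefficients `c` (degree at most `k`):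
`t ↦ ∑_{i=0}^{k} tⁱ • c i`. -/
noncomputable def polyEval {H : Type*} [NormedAddCommGroup H] [NormedSpace ℝ H]
    (k : ℕ) (c : ℕ → H) (t : ℝ) : H :=
  ∑ i ∈ Finset.range (k + 1), t ^ i • c i

/-- Coefficients of the termwise derivative of the polynomial with coefficients `c`. -/
noncomputable def dC {H : Type*} [NormedAddCommGroup H] [NormedSpace ℝ H]
    (c : ℕ → H) : ℕ → H := fun i => ((i : ℝ) + 1) • c (i + 1)

/-- `u` is the coefficient function of the time reconstruction `Û` (a polynomial of degree at
most `q+1`) of the polynomial `V` with coefficient function `v` (degree at most `q`), with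
jump `j`, on the interval `I = [t₀, t₁]`:
(i) `∫_I ⟨Û'' - V'', W⟩ = ⟨j, W(t₀)⟩` for all `H`-valued polynomials `W` of degree at most `q-1`;
(ii) `Û(t₀) = V(t₀)`; (iii) `Û'(t₀) = V'(t₀) - j`. -/
def IsTimeRecon {H : Type*} [NormedAddCommGroup H] [InnerProductSpace ℝ H]
    (t₀ t₁ : ℝ) (q : ℕ) (v : ℕ → H) (j : H) (u : ℕ → H) : Prop :=
  (∀ i, q + 1 < i → u i = 0) ∧
  (∀ w : ℕ → H, (∀ i, q ≤ i → w i = 0) →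
    (∫ t in t₀..t₁,
        ⟪polyEval (q + 1) (dC (dC u)) t - polyEval (q + 1) (dC (dC v)) t,
          polyEval (q + 1) w t⟫) = ⟪j, polyEval (q + 1) w t₀⟫) ∧
  polyEval (q + 1) u t₀ = polyEval (q + 1) v t₀ ∧
  polyEval (q + 1) (dC u) t₀ = polyEval (q + 1) (dC v) t₀ - j

section Helpers
variable {H : Type*} [NormedAddCommGroup H] [NormedSpace ℝ H]

lemma polyEval_continuous (k : ℕ) (c : ℕ → H) : Continuous (polyEval k c) := by
  unfold polyEval
  exact continuous_finset_sum _ fun i _ => (continuous_pow i).smul continuous_const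

lemma polyEval_add_smul (k : ℕ) (a : ℕ → H) (r : ℕ → ℝ) (j : H) (t : ℝ) :
    polyEval k (fun i => a i + r i • j) t
      = polyEval k a t + (∑ i ∈ Finset.range (k + 1), t ^ i * r i) • j := by
  unfold polyEval
  simp [smul_add, smul_smul, Finset.sum_add_distrib, Finset.sum_smul]

lemma polyEval_sub (k : ℕ) (a b : ℕ → H) (t : ℝ) :
    polyEval k (fun i => a i - b i) t = polyEval k a t - polyEval k b t := by
  unfold polyEval
  simp [smul_sub, Finset.sum_sub_distrib]

lemma dC_sub (a b : ℕ → H) : dC (fun i => a i - b i) = fun i => dC a i - dC b i := by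
  funext i; simp [dC, smul_sub]

end Helpers

/-- A continuous nonnegative function with zero integral has an infinite zero set. -/
lemma infinite_zeros {t₀ t₁ : ℝ} (h01 : t₀ < t₁) {f : ℝ → ℝ} (hc : Continuous f)
    (hnn : ∀ t, 0 ≤ f t) (hint : (∫ t in t₀..t₁, f t) = 0) : {t | f t = 0}.Infinite := by
  have hfi : IntervalIntegrable f volume t₀ t₁ := hc.intervalIntegrable _ _
  have hae : f =ᵐ[volume.restrict (Set.Ioc t₀ t₁)] 0 :=
    (intervalIntegral.integral_eq_zero_iff_of_le_of_nonneg_ae h01.le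
      (Filter.Eventually.of_forall fun x => hnn x) hfi).mp hint
  have h2 : ∀ᵐ x ∂(volume : Measure ℝ), x ∈ Set.Ioc t₀ t₁ → f x = 0 := by
    rw [← MeasureTheory.ae_restrict_iff' measurableSet_Ioc]; exact hae
  rw [MeasureTheory.ae_iff] at h2
  by_contra hfin
  rw [Set.not_infinite] at hfin
  have hz : (volume : Measure ℝ) {t | f t = 0} = 0 := hfin.countable.measure_zero _
  have hsub : Set.Ioc t₀ t₁ ⊆ {x | ¬(x ∈ Set.Ioc t₀ t₁ → f x = 0)} ∪ {t | f t = 0} := by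
    intro x hx
    by_cases h : f x = 0
    · exact Or.inr h
    · exact Or.inl (fun hcontra => h (hcontra hx))
  have : (volume : Measure ℝ) (Set.Ioc t₀ t₁) = 0 :=
    measure_mono_null hsub (measure_union_null h2 hz)
  rw [Real.volume_Ioc] at this
  simp only [ENNReal.ofReal_eq_zero] at this
  linarith

/-- If an `H`-valued polynomial vanishes on an infinite set, its coefficients vanish. -/
lemma coeffs_eq_zero {H : Type*} [NormedAddCommGroup H] [InnerProductSpace ℝ H]
    {n : ℕ} (a : Fin n → H)
    (h : {t : ℝ | (∑ m : Fin n, t ^ (m : ℕ) • a m) = 0}.Infinite) : ∀ m, a m = 0 := by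
  intro m₀
  have key : ∀ y : H, ⟪a m₀, y⟫ = 0 := by
    intro y
    set P : Polynomial ℝ := ∑ m : Fin n, Polynomial.C ⟪a m, y⟫ * Polynomial.X ^ (m : ℕ) with hP
    have heval : ∀ t : ℝ, P.eval t = ⟪∑ m : Fin n, t ^ (m : ℕ) • a m, y⟫ := by
      intro t
      rw [sum_inner, hP, Polynomial.eval_finset_sum]
      exact Finset.sum_congr rfl fun m _ => by
        rw [Polynomial.eval_mul, Polynomial.eval_C, Polynomial.eval_pow, Polynomial.eval_X,
          real_inner_smul_left]
        ring
    have hroot : {t : ℝ | P.IsRoot t}.Infinite := by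
      apply h.mono
      intro t ht
      simp only [Set.mem_setOf_eq] at ht ⊢
      rw [Polynomial.IsRoot, heval, ht, inner_zero_left]
    have hP0 : P = 0 := P.eq_zero_of_infinite_isRoot hroot
    have := congrArg (fun p => Polynomial.coeff p (m₀ : ℕ)) hP0
    simp only [hP, Polynomial.finset_sum_coeff, Polynomial.coeff_C_mul,
      Polynomial.coeff_X_pow, Polynomial.coeff_zero, mul_ite, mul_one, mul_zero] at this
    rwa [Finset.sum_eq_single m₀ (fun b _ hb => by
        rw [if_neg]; exact fun hcontra => hb (Fin.ext hcontra.symm))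
      (fun hm => absurd (Finset.mem_univ m₀) hm), if_pos rfl] at this
  have := key (a m₀)
  exact inner_self_eq_zero.mp this

/-- For any right-hand side there is a solution of the moment-matrix system. -/
lemma moment_matrix_solvable {t₀ t₁ : ℝ} (h01 : t₀ < t₁) (q : ℕ) (b : Fin q → ℝ) :
    ∃ c : Fin q → ℝ,
      (Matrix.of fun k m : Fin q => ∫ t in t₀..t₁, t ^ ((k : ℕ) + (m : ℕ))).mulVec c = b := by
  set M : Matrix (Fin q) (Fin q) ℝ :=
    Matrix.of fun k m : Fin q => ∫ t in t₀..t₁, t ^ ((k : ℕ) + (m : ℕ)) with hM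
  have hinj : Function.Injective M.mulVecLin := by
    rw [← LinearMap.ker_eq_bot, LinearMap.ker_eq_bot']
    intro c hc0
    rw [Matrix.mulVecLin_apply] at hc0
    have expand : ∀ t : ℝ, (∑ m : Fin q, c m * t ^ (m : ℕ)) ^ 2
        = ∑ k : Fin q, ∑ m : Fin q, (c k * c m) * t ^ ((k : ℕ) + (m : ℕ)) := by
      intro t
      rw [sq, Finset.sum_mul_sum]
      exact Finset.sum_congr rfl fun k _ => Finset.sum_congr rfl fun m _ => by
        rw [pow_add]; ring
    have henergy : (∫ t in t₀..t₁, (∑ m : Fin q, c m * t ^ (m : ℕ)) ^ 2)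
        = ∑ k : Fin q, ∑ m : Fin q, (c k * c m) * (∫ t in t₀..t₁, t ^ ((k : ℕ) + (m : ℕ))) := by
      simp only [expand]
      rw [intervalIntegral.integral_finset_sum
        (f := fun k t => ∑ m : Fin q, c k * c m * t ^ ((k : ℕ) + (m : ℕ))) (fun k _ =>
        (continuous_finset_sum _ fun m _ =>
          continuous_const.mul (continuous_pow _)).intervalIntegrable _ _)]
      exact Finset.sum_congr rfl fun k _ => by
        rw [intervalIntegral.integral_finset_sum
          (f := fun m t => c k * c m * t ^ ((k : ℕ) + (m : ℕ))) (fun m _ =>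
          (continuous_const.mul (continuous_pow _)).intervalIntegrable _ _)]
        exact Finset.sum_congr rfl fun m _ => intervalIntegral.integral_const_mul _ _
    have hzero : (∫ t in t₀..t₁, (∑ m : Fin q, c m * t ^ (m : ℕ)) ^ 2) = 0 := by
      rw [henergy]
      have : ∀ k : Fin q, ∑ m : Fin q, (c k * c m) * (∫ t in t₀..t₁, t ^ ((k : ℕ) + (m : ℕ)))
          = c k * (M.mulVec c k) := by
        intro k
        rw [Matrix.mulVec, dotProduct, Finset.mul_sum]
        exact Finset.sum_congr rfl fun m _ => by rw [hM]; simp [Matrix.of_apply]; ring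
      rw [Finset.sum_congr rfl fun k _ => this k]
      simp [hc0]
    have hinf : {t : ℝ | (∑ m : Fin q, c m * t ^ (m : ℕ)) = 0}.Infinite := by
      have hcont : Continuous fun t : ℝ => ∑ m : Fin q, c m * t ^ (m : ℕ) :=
        continuous_finset_sum _ fun m _ => continuous_const.mul (continuous_pow _)
      have := infinite_zeros h01 (f := fun t => (∑ m : Fin q, c m * t ^ (m : ℕ)) ^ 2)
        (hcont.pow 2) (fun t => sq_nonneg _) hzero
      apply this.mono
      intro t ht
      simp only [Set.mem_setOf_eq] at ht ⊢
      exact pow_eq_zero_iff (n := 2) (by norm_num) |>.mp ht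
    have hco := coeffs_eq_zero (H := ℝ) (fun m : Fin q => c m) (by
      apply hinf.mono
      intro t ht
      simp only [Set.mem_setOf_eq] at ht ⊢
      rw [← ht]
      exact Finset.sum_congr rfl fun m _ => by rw [smul_eq_mul]; ring)
    funext m; exact hco m
  obtain ⟨c, hc⟩ := (LinearMap.injective_iff_surjective.mp hinj) b
  exact ⟨c, by rwa [Matrix.mulVecLin_apply] at hc⟩

/-! ### The construction -/

noncomputable def pC (q : ℕ) (c : Fin q → ℝ) : ℕ → ℝ := fun m => if h : m < q then c ⟨m, h⟩ else 0

noncomputable def sA (p : ℕ → ℝ) : ℕ → ℝ := fun n => p (n - 2) / ((n : ℝ) * ((n : ℝ) - 1))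

noncomputable def s1C (t₀ : ℝ) (q : ℕ) (p : ℕ → ℝ) : ℝ :=
  -1 - ∑ i ∈ Finset.range (q + 1), t₀ ^ (i + 1) * ((((i + 1 : ℕ) : ℝ) + 1) * sA p (i + 1 + 1))

noncomputable def sP (t₀ : ℝ) (q : ℕ) (p : ℕ → ℝ) : ℕ → ℝ := fun n =>
  if n = 1 then s1C t₀ q p else sA p n

noncomputable def sC (t₀ : ℝ) (q : ℕ) (p : ℕ → ℝ) : ℕ → ℝ := fun n =>
  if n = 0 then - ∑ i ∈ Finset.range (q + 1), t₀ ^ (i + 1) * sP t₀ q p (i + 1) else sP t₀ q p n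

lemma sC_zero (t₀ : ℝ) (q : ℕ) (p : ℕ → ℝ) :
    sC t₀ q p 0 = - ∑ i ∈ Finset.range (q + 1), t₀ ^ (i + 1) * sP t₀ q p (i + 1) := if_pos rfl

lemma sC_succ (t₀ : ℝ) (q : ℕ) (p : ℕ → ℝ) (n : ℕ) :
    sC t₀ q p (n + 1) = sP t₀ q p (n + 1) := if_neg (Nat.succ_ne_zero n)

lemma sC_one (t₀ : ℝ) (q : ℕ) (p : ℕ → ℝ) : sC t₀ q p 1 = s1C t₀ q p := by
  rw [sC_succ]; exact if_pos rfl

lemma sC_two (t₀ : ℝ) (q : ℕ) (p : ℕ → ℝ) (n : ℕ) :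
    sC t₀ q p (n + 2) = sA p (n + 2) := by
  rw [show n + 2 = (n + 1) + 1 by omega, sC_succ]
  exact if_neg (by omega)

/-! ### Existence -/

lemma recon_exists {H : Type*} [NormedAddCommGroup H] [InnerProductSpace ℝ H]
    (t₀ t₁ : ℝ) (h01 : t₀ < t₁) (q : ℕ)
    (v : ℕ → H) (hv : ∀ i, q < i → v i = 0) (j : H) :
    ∃ u : ℕ → H, IsTimeRecon t₀ t₁ q v j u := by
  obtain ⟨c, hc⟩ := moment_matrix_solvable h01 q (fun k => t₀ ^ (k : ℕ))
  set p : ℕ → ℝ := pC q c with hpdef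
  have hp0 : ∀ m, q ≤ m → p m = 0 := fun m hm => dif_neg (by omega)
  refine ⟨fun i => v i + sC t₀ q p i • j, ?_, ?_, ?_, ?_⟩
  · -- degree bound
    intro i hi
    obtain ⟨n, rfl⟩ : ∃ n, i = n + 2 := ⟨i - 2, by omega⟩
    show v (n + 2) + sC t₀ q p (n + 2) • j = 0
    rw [hv _ (by omega), sC_two, sA]
    simp only [Nat.add_sub_cancel]
    rw [hp0 n (by omega), zero_div, zero_smul, add_zero]
  · -- integral identity
    intro w hw
    have hdd : dC (dC (fun i => v i + sC t₀ q p i • j)) = fun i => dC (dC v) i + p i • j := by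
      funext i
      simp only [dC, smul_add, smul_smul]
      congr 1
      rw [sC_two, sA]
      simp only [Nat.add_sub_cancel]
      have h1 : ((i : ℝ) + 1) ≠ 0 := by positivity
      have h2 : ((i : ℝ) + 2) ≠ 0 := by positivity
      congr 1
      push_cast
      rw [show ((i : ℝ) + 2 - 1) = (i : ℝ) + 1 by ring]
      field_simp
      ring
    have hdiff : ∀ t : ℝ,
        polyEval (q + 1) (dC (dC fun i => v i + sC t₀ q p i • j)) t
          - polyEval (q + 1) (dC (dC v)) t
        = (∑ m ∈ Finset.range q, t ^ m * p m) • j := by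
      intro t
      rw [hdd, polyEval_add_smul, add_sub_cancel_left]
      congr 1
      symm
      apply Finset.sum_subset (Finset.range_subset_range.mpr (by omega))
      intro x _ hx
      have hxq : q ≤ x := by simp only [Finset.mem_range] at hx; omega
      rw [hp0 x hxq, mul_zero]
    have hw' : ∀ t : ℝ, polyEval (q + 1) w t = ∑ k ∈ Finset.range q, t ^ k • w k := by
      intro t
      unfold polyEval
      symm
      apply Finset.sum_subset (Finset.range_subset_range.mpr (by omega))
      intro x _ hx
      have hxq : q ≤ x := by simp only [Finset.mem_range] at hx; omega
      rw [hw x hxq, smul_zero]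
    have hG : ∀ t : ℝ,
        ⟪polyEval (q + 1) (dC (dC fun i => v i + sC t₀ q p i • j)) t
            - polyEval (q + 1) (dC (dC v)) t, polyEval (q + 1) w t⟫
          = ∑ k ∈ Finset.range q, ∑ m ∈ Finset.range q,
              (p m * ⟪j, w k⟫) * t ^ (m + k) := by
      intro t
      rw [hdiff t, hw' t, real_inner_smul_left, inner_sum, Finset.mul_sum]
      refine Finset.sum_congr rfl fun k _ => ?_
      rw [real_inner_smul_right, Finset.sum_mul]
      refine Finset.sum_congr rfl fun m _ => ?_
      rw [pow_add]; ring
    calc (∫ t in t₀..t₁,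
            ⟪polyEval (q + 1) (dC (dC fun i => v i + sC t₀ q p i • j)) t
              - polyEval (q + 1) (dC (dC v)) t, polyEval (q + 1) w t⟫)
        = ∑ k ∈ Finset.range q, ∑ m ∈ Finset.range q,
            (p m * ⟪j, w k⟫) * (∫ t in t₀..t₁, t ^ (m + k)) := by
          simp only [hG]
          rw [intervalIntegral.integral_finset_sum
            (f := fun k t => ∑ m ∈ Finset.range q, p m * ⟪j, w k⟫ * t ^ (m + k)) (fun k _ =>
            (continuous_finset_sum _ fun m _ =>
              continuous_const.mul (continuous_pow _)).intervalIntegrable _ _)]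
          refine Finset.sum_congr rfl fun k _ => ?_
          rw [intervalIntegral.integral_finset_sum
            (f := fun m t => p m * ⟪j, w k⟫ * t ^ (m + k)) (fun m _ =>
            (continuous_const.mul (continuous_pow _)).intervalIntegrable _ _)]
          exact Finset.sum_congr rfl fun m _ => intervalIntegral.integral_const_mul _ _
      _ = ∑ k ∈ Finset.range q, ⟪j, w k⟫ * t₀ ^ k := by
          rw [← Fin.sum_univ_eq_sum_range (fun k => ∑ m ∈ Finset.range q,
              (p m * ⟪j, w k⟫) * (∫ t in t₀..t₁, t ^ (m + k))) q,
            ← Fin.sum_univ_eq_sum_range (fun k => ⟪j, w k⟫ * t₀ ^ k) q]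
          refine Finset.sum_congr rfl fun k _ => ?_
          rw [← Fin.sum_univ_eq_sum_range (fun m =>
              (p m * ⟪j, w (k : ℕ)⟫) * (∫ t in t₀..t₁, t ^ (m + (k : ℕ)))) q]
          have hterm : ∀ m : Fin q,
              (p (m : ℕ) * ⟪j, w (k : ℕ)⟫) * (∫ t in t₀..t₁, t ^ ((m : ℕ) + (k : ℕ)))
                = ⟪j, w (k : ℕ)⟫ *
                  ((Matrix.of fun k m : Fin q =>
                    ∫ t in t₀..t₁, t ^ ((k : ℕ) + (m : ℕ))) k m * c m) := by
            intro m
            rw [Nat.add_comm (m : ℕ) (k : ℕ)]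
            have : p (m : ℕ) = c m := by
              rw [hpdef]; unfold pC; rw [dif_pos m.isLt]
            rw [this, Matrix.of_apply]
            ring
          rw [Finset.sum_congr rfl fun m _ => hterm m, ← Finset.mul_sum]
          congr 1
          have : ∑ m : Fin q, (Matrix.of fun k m : Fin q =>
              ∫ t in t₀..t₁, t ^ ((k : ℕ) + (m : ℕ))) k m * c m
              = (Matrix.of fun k m : Fin q =>
                  ∫ t in t₀..t₁, t ^ ((k : ℕ) + (m : ℕ))).mulVec c k := by
            rw [Matrix.mulVec, dotProduct]
          rw [this, hc]
      _ = ⟪j, polyEval (q + 1) w t₀⟫ := by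
          rw [hw' t₀, inner_sum]
          refine Finset.sum_congr rfl fun k _ => ?_
          rw [real_inner_smul_right]; ring
  · -- initial value
    rw [polyEval_add_smul]
    have hsum : ∑ i ∈ Finset.range (q + 1 + 1), t₀ ^ i * sC t₀ q p i = 0 := by
      rw [Finset.sum_range_succ']
      simp only [sC_succ, sC_zero, pow_zero, one_mul]
      ring
    rw [hsum, zero_smul, add_zero]
  · -- initial derivative
    have hdcu : dC (fun i => v i + sC t₀ q p i • j)
        = fun i => dC v i + (((i : ℝ) + 1) * sC t₀ q p (i + 1)) • j := by
      funext i
      simp only [dC, smul_add, smul_smul]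
    rw [hdcu, polyEval_add_smul]
    have hsum : ∑ i ∈ Finset.range (q + 1 + 1),
        t₀ ^ i * (((i : ℝ) + 1) * sC t₀ q p (i + 1)) = -1 := by
      rw [Finset.sum_range_succ']
      simp only [sC_two, sC_one, s1C, pow_zero, one_mul, Nat.cast_zero, zero_add]
      ring
    rw [hsum, neg_one_smul, ← sub_eq_add_neg]

/-! ### Uniqueness -/

lemma recon_unique {H : Type*} [NormedAddCommGroup H] [InnerProductSpace ℝ H]
    {t₀ t₁ : ℝ} (h01 : t₀ < t₁) {q : ℕ} {v : ℕ → H} {j : H} {u₁ u₂ : ℕ → H}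
    (h₁ : IsTimeRecon t₀ t₁ q v j u₁) (h₂ : IsTimeRecon t₀ t₁ q v j u₂) : u₁ = u₂ := by
  obtain ⟨hdeg₁, hint₁, hic₁, hdc₁⟩ := h₁
  obtain ⟨hdeg₂, hint₂, hic₂, hdc₂⟩ := h₂
  set d : ℕ → H := fun n => u₁ n - u₂ n with hd
  set w : ℕ → H := dC (dC d) with hwdef
  have hw2 : w = fun i => dC (dC u₁) i - dC (dC u₂) i := by
    rw [hwdef, hd, dC_sub, dC_sub]
  have hw : ∀ i, q ≤ i → w i = 0 := by
    intro i hi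
    rw [hw2]
    show dC (dC u₁) i - dC (dC u₂) i = 0
    simp only [dC]
    rw [hdeg₁ (i + 1 + 1) (by omega), hdeg₂ (i + 1 + 1) (by omega), smul_zero, smul_zero,
      sub_self]
  have hF : ∀ t : ℝ, polyEval (q + 1) w t
      = polyEval (q + 1) (dC (dC u₁)) t - polyEval (q + 1) (dC (dC u₂)) t := by
    intro t
    rw [hw2]
    exact polyEval_sub _ _ _ _
  have key : (∫ t in t₀..t₁, ⟪polyEval (q + 1) w t, polyEval (q + 1) w t⟫) = 0 := by
    have e1 := hint₁ w hw
    have e2 := hint₂ w hw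
    have int1 : IntervalIntegrable (fun t =>
        ⟪polyEval (q + 1) (dC (dC u₁)) t - polyEval (q + 1) (dC (dC v)) t,
          polyEval (q + 1) w t⟫) volume t₀ t₁ :=
      (((polyEval_continuous _ _).sub (polyEval_continuous _ _)).inner
        (polyEval_continuous _ _)).intervalIntegrable _ _
    have int2 : IntervalIntegrable (fun t =>
        ⟪polyEval (q + 1) (dC (dC u₂)) t - polyEval (q + 1) (dC (dC v)) t,
          polyEval (q + 1) w t⟫) volume t₀ t₁ :=
      (((polyEval_continuous _ _).sub (polyEval_continuous _ _)).inner
        (polyEval_continuous _ _)).intervalIntegrable _ _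
    have h0 : (∫ t in t₀..t₁,
        (⟪polyEval (q + 1) (dC (dC u₁)) t - polyEval (q + 1) (dC (dC v)) t,
            polyEval (q + 1) w t⟫
          - ⟪polyEval (q + 1) (dC (dC u₂)) t - polyEval (q + 1) (dC (dC v)) t,
            polyEval (q + 1) w t⟫)) = 0 := by
      rw [intervalIntegral.integral_sub int1 int2, e1, e2, sub_self]
    have hpt : ∀ t : ℝ,
        ⟪polyEval (q + 1) (dC (dC u₁)) t - polyEval (q + 1) (dC (dC v)) t,
            polyEval (q + 1) w t⟫
          - ⟪polyEval (q + 1) (dC (dC u₂)) t - polyEval (q + 1) (dC (dC v)) t,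
            polyEval (q + 1) w t⟫
        = ⟪polyEval (q + 1) w t, polyEval (q + 1) w t⟫ := by
      intro t
      rw [← inner_sub_left, sub_sub_sub_cancel_right, ← hF t]
    simp only [← hpt]
    exact h0
  have hinf0 := infinite_zeros h01
    (f := fun t => ⟪polyEval (q + 1) w t, polyEval (q + 1) w t⟫)
    ((polyEval_continuous _ _).inner (polyEval_continuous _ _))
    (fun t => real_inner_self_nonneg) key
  have hwz : ∀ i : Fin (q + 2), w i = 0 := by
    apply coeffs_eq_zero (fun i : Fin (q + 2) => w i)
    apply hinf0.mono
    intro t ht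
    simp only [Set.mem_setOf_eq] at ht ⊢
    have hzero : polyEval (q + 1) w t = 0 := inner_self_eq_zero.mp ht
    rw [← hzero]
    unfold polyEval
    exact Fin.sum_univ_eq_sum_range (fun i => t ^ i • w i) (q + 2)
  have hwall : ∀ i, w i = 0 := fun i =>
    if h : i < q + 2 then hwz ⟨i, h⟩ else hw i (by omega)
  have hd2 : ∀ n, d (n + 2) = 0 := by
    intro n
    have hwn := hwall n
    rw [hwdef] at hwn
    simp only [dC] at hwn
    have hne1 : ((n : ℝ) + 1) ≠ 0 := by positivity
    have hne2 : (((n + 1 : ℕ) : ℝ) + 1) ≠ 0 := by positivity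
    rcases smul_eq_zero.mp hwn with h | h
    · exact absurd h hne1
    rcases smul_eq_zero.mp h with h' | h'
    · exact absurd h' hne2
    · exact h'
  have hd1 : d 1 = 0 := by
    have hpd : polyEval (q + 1) (dC d) t₀ = 0 := by
      rw [hd, dC_sub, polyEval_sub, hdc₁, hdc₂, sub_self]
    have heq : polyEval (q + 1) (dC d) t₀ = d 1 := by
      unfold polyEval
      rw [Finset.sum_eq_single 0 (fun b _ hb => by
          obtain ⟨n, rfl⟩ : ∃ n, b = n + 1 := ⟨b - 1, by omega⟩
          show t₀ ^ (n + 1) • dC d (n + 1) = 0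
          simp [dC, hd2 n])
        (fun habs => absurd (Finset.mem_range.mpr (by omega)) habs)]
      show t₀ ^ 0 • dC d 0 = d 1
      simp [dC]
    rw [← heq]; exact hpd
  have hd0 : d 0 = 0 := by
    have hpd : polyEval (q + 1) d t₀ = 0 := by
      rw [hd, polyEval_sub, hic₁, hic₂, sub_self]
    have heq : polyEval (q + 1) d t₀ = d 0 := by
      unfold polyEval
      rw [Finset.sum_eq_single 0 (fun b _ hb => by
          match b, hb with
          | 1, _ => simp [hd1]
          | (n + 2), _ => simp [hd2 n])
        (fun habs => absurd (Finset.mem_range.mpr (by omega)) habs)]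
      simp
    rw [← heq]; exact hpd
  funext n
  have hdn : d n = 0 := by
    match n with
    | 0 => exact hd0
    | 1 => exact hd1
    | (n + 2) => exact hd2 n
  exact sub_eq_zero.mp hdn

/-- Existence and uniqueness of the time reconstruction. -/
theorem time_reconstruction_exists_unique
    {H : Type*} [NormedAddCommGroup H] [InnerProductSpace ℝ H] [CompleteSpace H]
    (t₀ t₁ : ℝ) (h01 : t₀ < t₁) (q : ℕ) (hq : 2 ≤ q)
    (v : ℕ → H) (hv : ∀ i, q < i → v i = 0) (j : H) :
    ∃! u : ℕ → H, IsTimeRecon t₀ t₁ q v j u := by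
  obtain ⟨u, hu⟩ := recon_exists t₀ t₁ h01 q v hv j
  exact ⟨u, hu, fun y hy => recon_unique h01 hy hu⟩
end

section
/- L² identity for the derivative of the time reconstruction (Lemma 4.2, eq. (4.5a)): the time reconstruction Û satisfies ∫_I ‖V'(t) − Û'(t)‖²_H dt = τ · c₁(q)² · ‖j‖²_H, where c₁(q)² = q/((2q−1)(2q+1)). -/
open scoped RealInnerProductSpace
open MeasureTheory

open Polynomial MeasureTheory intervalIntegral

lemma polyInt (p : ℝ[X]) (a b : ℝ) :
    ∫ t in a..b, p.derivative.eval t = p.eval b - p.eval a := by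
  rw [show (fun t => p.derivative.eval t) = deriv (fun t => p.eval t) from
      funext fun x => (Polynomial.deriv (p := p) (x := x)).symm]
  apply intervalIntegral.integral_deriv_eq_sub (fun x _ => p.differentiableAt)
  rw [show deriv (fun t => p.eval t) = fun t => p.derivative.eval t from
      funext fun x => Polynomial.deriv (p := p) (x := x)]
  exact (p.derivative.continuous).intervalIntegrable _ _

lemma polyIntegrable (p : ℝ[X]) (a b : ℝ) :
    IntervalIntegrable (fun t => p.eval t) volume a b :=
  (p.continuous).intervalIntegrable _ _

lemma polyIBP (p q : ℝ[X]) (a b : ℝ) :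
    ∫ t in a..b, p.eval t * q.derivative.eval t
      = p.eval b * q.eval b - p.eval a * q.eval a
        - ∫ t in a..b, p.derivative.eval t * q.eval t := by
  have h := polyInt (p * q) a b
  simp only [Polynomial.derivative_mul, Polynomial.eval_add, Polynomial.eval_mul] at h
  rw [intervalIntegral.integral_add (f := fun t => p.derivative.eval t * q.eval t)
    (g := fun t => p.eval t * q.derivative.eval t)
    ((p.derivative.continuous.mul q.continuous).intervalIntegrable _ _)
    ((p.continuous.mul q.derivative.continuous).intervalIntegrable _ _)] at h
  linarith

lemma polyIBP_iter (a b : ℝ) :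
    ∀ (n : ℕ) (p g : ℝ[X]),
      (∀ k, k < n → (derivative^[k] g).eval a = 0 ∧ (derivative^[k] g).eval b = 0) →
      (∫ t in a..b, p.eval t * (derivative^[n] g).eval t)
        = (-1 : ℝ)^n * ∫ t in a..b, (derivative^[n] p).eval t * g.eval t := by
  intro n
  induction n with
  | zero => intro p g _; simp
  | succ n ih =>
    intro p g hg
    have h1 : (∫ t in a..b, p.eval t * (derivative^[n+1] g).eval t)
        = - ∫ t in a..b, p.derivative.eval t * (derivative^[n] g).eval t := by
      have h := polyIBP p (derivative^[n] g) a b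
      rw [← Function.iterate_succ_apply' derivative n g] at h
      rw [h, (hg n (by omega)).1, (hg n (by omega)).2]
      ring
    rw [h1, ih p.derivative g (fun k hk => hg k (by omega)),
      ← Function.iterate_succ_apply derivative n p]
    ring

/-- `((X-a)(X-b))^n`. -/
noncomputable def gP (n : ℕ) (a b : ℝ) : ℝ[X] := ((X - C a) * (X - C b))^n

lemma gP_ne_zero (n : ℕ) (a b : ℝ) : gP n a b ≠ 0 :=
  (((monic_X_sub_C a).mul (monic_X_sub_C b)).pow n).ne_zero

lemma gP_natDegree (n : ℕ) (a b : ℝ) : (gP n a b).natDegree = 2 * n := by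
  rw [gP, natDegree_pow, natDegree_mul (X_sub_C_ne_zero a) (X_sub_C_ne_zero b),
    natDegree_X_sub_C, natDegree_X_sub_C]
  ring

lemma gP_vanish (n : ℕ) (a b : ℝ) (k : ℕ) (hk : k < n) :
    (derivative^[k] (gP n a b)).eval a = 0 ∧ (derivative^[k] (gP n a b)).eval b = 0 := by
  constructor
  · apply Polynomial.isRoot_iterate_derivative_of_lt_rootMultiplicity
    apply lt_of_lt_of_le hk
    rw [Polynomial.le_rootMultiplicity_iff (gP_ne_zero n a b)]
    rw [gP, mul_pow]; exact dvd_mul_right _ _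
  · apply Polynomial.isRoot_iterate_derivative_of_lt_rootMultiplicity
    apply lt_of_lt_of_le hk
    rw [Polynomial.le_rootMultiplicity_iff (gP_ne_zero n a b)]
    rw [gP, mul_pow]; exact dvd_mul_left _ _

/-- Scaled Legendre-type polynomial on `[a,b]`: `n`-th derivative of `((X-a)(X-b))^n`. -/
noncomputable def RP (n : ℕ) (a b : ℝ) : ℝ[X] := derivative^[n] (gP n a b)

lemma RP_orth (n : ℕ) (a b : ℝ) (p : ℝ[X]) (hp : p.natDegree < n) :
    (∫ t in a..b, p.eval t * (RP n a b).eval t) = 0 := by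
  rw [RP, polyIBP_iter a b n p _ (gP_vanish n a b), Polynomial.iterate_derivative_eq_zero hp]
  simp

lemma RP_eval_a (n : ℕ) (a b : ℝ) : (RP n a b).eval a = (n.factorial : ℝ) * (a - b)^n := by
  rw [RP, gP, mul_pow, Polynomial.iterate_derivative_mul]
  rw [Polynomial.eval_finset_sum]
  rw [Finset.sum_eq_single 0]
  · simp [Polynomial.iterate_derivative_X_sub_pow_self]
  · intro k hk hk0
    have hlt : n - k < n := by
      simp only [Finset.mem_range] at hk; omega
    have := Polynomial.isRoot_iterate_derivative_of_lt_rootMultiplicity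
      (p := ((X : ℝ[X]) - C a)^n) (t := a) (n := n - k) ?_
    · simp only [Polynomial.eval_smul, Polynomial.eval_mul, smul_eq_mul]
      rw [this]; ring
    · apply lt_of_lt_of_le hlt
      rw [Polynomial.le_rootMultiplicity_iff (pow_ne_zero n (X_sub_C_ne_zero a))]
  · intro h; simp at h

lemma RP_eval_b (n : ℕ) (a b : ℝ) : (RP n a b).eval b = (n.factorial : ℝ) * (b - a)^n := by
  rw [RP, gP, mul_pow, Polynomial.iterate_derivative_mul]
  rw [Polynomial.eval_finset_sum]
  rw [Finset.sum_eq_single n]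
  · simp [Polynomial.iterate_derivative_X_sub_pow_self]
    ring
  · intro k hk hkn
    have hlt : k < n := by
      simp only [Finset.mem_range] at hk; omega
    have := Polynomial.isRoot_iterate_derivative_of_lt_rootMultiplicity
      (p := ((X : ℝ[X]) - C b)^n) (t := b) (n := k) ?_
    · simp only [Polynomial.eval_smul, Polynomial.eval_mul, smul_eq_mul]
      rw [this]; ring
    · apply lt_of_lt_of_le hlt
      rw [Polynomial.le_rootMultiplicity_iff (pow_ne_zero n (X_sub_C_ne_zero b))]
  · intro h; simp at h

lemma RP_iterate (n : ℕ) (a b : ℝ) :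
    derivative^[n] (RP n a b) = C (((2 * n).factorial : ℝ)) := by
  rw [RP, ← Function.iterate_add_apply]
  have hdeg := gP_natDegree n a b
  ext m
  rw [Polynomial.coeff_iterate_derivative, Polynomial.coeff_C]
  rcases Nat.eq_zero_or_pos m with hm | hm
  · subst hm
    simp only [zero_add, if_pos rfl]
    have hlead : (gP n a b).coeff (n + n) = 1 := by
      have hmono : (gP n a b).Monic := ((monic_X_sub_C a).mul (monic_X_sub_C b)).pow n
      have := hmono.coeff_natDegree
      rwa [hdeg, two_mul] at this
    rw [hlead]
    simp [Nat.descFactorial_self, two_mul]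
  · rw [if_neg (by omega)]
    have : (gP n a b).coeff (m + (n + n)) = 0 := by
      apply Polynomial.coeff_eq_zero_of_natDegree_lt
      rw [hdeg]; omega
    rw [this, smul_zero]

lemma beta_int (a b : ℝ) :
    ∀ (k m : ℕ), (∫ t in a..b, (t - a)^m * (t - b)^k)
      = (-1 : ℝ)^k * ((m.factorial : ℝ) * (k.factorial : ℝ) / ((m + k + 1).factorial : ℝ))
        * (b - a)^(m + k + 1) := by
  intro k
  induction k with
  | zero =>
    intro m
    have : (∫ t in a..b, (t - a)^m * (t - b)^0) = ∫ t in a..b, (t - a)^m := by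
      apply intervalIntegral.integral_congr; intro t _; simp
    rw [this]
    have h2 : (∫ t in a..b, (t - a)^m) = ∫ t in (a-a)..(b-a), t^m := by
      rw [← intervalIntegral.integral_comp_sub_right (fun t => t^m) a]
    rw [h2, sub_self, integral_pow, zero_pow (by omega)]
    rw [show m + 0 + 1 = m + 1 from rfl, Nat.factorial_succ]
    push_cast
    have : ((m:ℝ)+1) ≠ 0 := by positivity
    have h3 : (m.factorial : ℝ) ≠ 0 := by positivity
    field_simp
    ring
  | succ k ih =>
    intro m
    -- IBP : p = (X-Ca)^(m+1), q = (X-Cb)^(k+1)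
    have h := polyIBP ((X - C a)^(m+1)) ((X - C b)^(k+1)) a b
    rw [Polynomial.derivative_X_sub_C_pow, Polynomial.derivative_X_sub_C_pow] at h
    simp only [Polynomial.eval_mul, Polynomial.eval_pow, Polynomial.eval_sub,
      Polynomial.eval_X, Polynomial.eval_C, Polynomial.eval_natCast,
      Nat.add_sub_cancel, sub_self, Nat.cast_add, Nat.cast_one] at h
    rw [zero_pow (by omega), zero_pow (by omega)] at h
    -- h : ∫ (t-a)^(m+1) * ((k+1) * (t-b)^k) = 0*... - 0*... - ∫ ((m+1) * (t-a)^m) * (t-b)^(k+1)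
    have hL : (∫ t in a..b, (t-a)^(m+1) * (((k:ℝ)+1) * (t-b)^k))
        = ((k:ℝ)+1) * ∫ t in a..b, (t-a)^(m+1) * (t-b)^k := by
      rw [← intervalIntegral.integral_const_mul]
      apply intervalIntegral.integral_congr; intro t _; ring
    have hR : (∫ t in a..b, (((m:ℝ)+1) * (t-a)^m) * (t-b)^(k+1))
        = ((m:ℝ)+1) * ∫ t in a..b, (t-a)^m * (t-b)^(k+1) := by
      rw [← intervalIntegral.integral_const_mul]
      apply intervalIntegral.integral_congr; intro t _; ring
    rw [hL, hR] at h
    have hik := ih (m+1)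
    -- solve for ∫ (t-a)^m (t-b)^(k+1)
    have hm1 : ((m:ℝ)+1) ≠ 0 := by positivity
    have : (∫ t in a..b, (t-a)^m * (t-b)^(k+1))
        = -(((k:ℝ)+1) / ((m:ℝ)+1)) * ∫ t in a..b, (t-a)^(m+1) * (t-b)^k := by
      field_simp
      linarith [h]
    rw [this, hik]
    have e1 : m + 1 + k + 1 = m + (k+1) + 1 := by omega
    rw [e1]
    rw [Nat.factorial_succ k, Nat.factorial_succ m]
    push_cast
    have h2 : ((m + (k+1) + 1).factorial : ℝ) ≠ 0 := by positivity
    field_simp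
    ring

lemma gP_int (n : ℕ) (a b : ℝ) :
    (∫ t in a..b, (gP n a b).eval t)
      = (-1:ℝ)^n * ((n.factorial : ℝ)^2 / (((2*n+1)).factorial : ℝ)) * (b-a)^(2*n+1) := by
  have : (∫ t in a..b, (gP n a b).eval t) = ∫ t in a..b, (t - a)^n * (t - b)^n := by
    apply intervalIntegral.integral_congr; intro t _
    simp [gP, mul_pow]
  rw [this, beta_int a b n n]
  have e1 : n + n + 1 = 2*n+1 := by omega
  rw [e1]
  ring

lemma RP_sq_int (n : ℕ) (a b : ℝ) :
    (∫ t in a..b, ((RP n a b).eval t)^2)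
      = ((n.factorial : ℝ)^2 / (2*(n:ℝ)+1)) * (b-a)^(2*n+1) := by
  have h1 : (∫ t in a..b, ((RP n a b).eval t)^2)
      = ∫ t in a..b, (RP n a b).eval t * (derivative^[n] (gP n a b)).eval t := by
    apply intervalIntegral.integral_congr; intro t _
    rw [← RP]; ring
  rw [h1, polyIBP_iter a b n _ _ (gP_vanish n a b), RP_iterate]
  have h2 : (∫ t in a..b, (C (((2*n).factorial : ℝ))).eval t * (gP n a b).eval t)
      = ((2*n).factorial : ℝ) * ∫ t in a..b, (gP n a b).eval t := by
    rw [← intervalIntegral.integral_const_mul]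
    apply intervalIntegral.integral_congr; intro t _; simp
  rw [h2, gP_int]
  have h3 : ((2*n+1).factorial : ℝ) = (2*(n:ℝ)+1) * ((2*n).factorial : ℝ) := by
    rw [Nat.factorial_succ]; push_cast; ring
  have h4 : ((2*n).factorial : ℝ) ≠ 0 := by positivity
  have h5 : (2*(n:ℝ)+1) ≠ 0 := by positivity
  rw [h3]
  field_simp
  have hpow : (-1:ℝ)^n * (-1:ℝ)^n = 1 := by
    rw [← pow_add, ← two_mul, pow_mul]; norm_num
  rw [show ((-1:ℝ)^n)^2 = 1 by rw [sq, hpow], one_mul]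

/-- The polynomial `ψ` of degree `r+1` with `ψ(a)=1`, `ψ(b)=0`, orthogonal to degree `< r`. -/
noncomputable def psiP (r : ℕ) (a b : ℝ) : ℝ[X] :=
  C ((-1:ℝ)^(r+1) / (2 * (r+1).factorial * (b-a)^(r+1))) * RP (r+1) a b
  + C ((-1:ℝ)^r / (2 * r.factorial * (b-a)^r)) * RP r a b

lemma RP_natDegree_le (n : ℕ) (a b : ℝ) : (RP n a b).natDegree ≤ n := by
  have := Polynomial.natDegree_iterate_derivative (gP n a b) n
  rw [gP_natDegree] at this
  rw [RP]
  omega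

lemma psiP_natDegree_le (r : ℕ) (a b : ℝ) : (psiP r a b).natDegree ≤ r + 1 := by
  apply le_trans (Polynomial.natDegree_add_le _ _)
  simp only [max_le_iff]
  constructor
  · exact le_trans (Polynomial.natDegree_C_mul_le _ _) (RP_natDegree_le _ a b)
  · exact le_trans (le_trans (Polynomial.natDegree_C_mul_le _ _) (RP_natDegree_le _ a b))
      (by omega)

lemma psiP_eval_a (r : ℕ) (a b : ℝ) (hab : a < b) : (psiP r a b).eval a = 1 := by
  have hT : (b - a) ≠ 0 := by linarith
  have hf1 : ((r+1).factorial : ℝ) ≠ 0 := by positivity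
  have hf2 : (r.factorial : ℝ) ≠ 0 := by positivity
  have hs : ∀ m : ℕ, (-1:ℝ)^m * (-1:ℝ)^m = 1 := by
    intro m; rw [← pow_add, ← two_mul, pow_mul]; norm_num
  simp only [psiP, Polynomial.eval_add, Polynomial.eval_mul, Polynomial.eval_C,
    RP_eval_a]
  have hneg : ∀ m : ℕ, (a-b)^m = (-1:ℝ)^m * (b-a)^m := by
    intro m; rw [show a - b = -(b-a) by ring, neg_pow]
  have hTp : (b-a)^(r+1) ≠ 0 := pow_ne_zero _ hT
  have hTp2 : (b-a)^r ≠ 0 := pow_ne_zero _ hT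
  field_simp
  rw [hneg (r+1), hneg r]
  linear_combination ((b-a)^(r+1) * (b-a)^r) * (hs (r+1) + hs r)

lemma psiP_eval_b (r : ℕ) (a b : ℝ) (hab : a < b) : (psiP r a b).eval b = 0 := by
  have hT : (b - a) ≠ 0 := by linarith
  have hf1 : ((r+1).factorial : ℝ) ≠ 0 := by positivity
  have hf2 : (r.factorial : ℝ) ≠ 0 := by positivity
  simp only [psiP, Polynomial.eval_add, Polynomial.eval_mul, Polynomial.eval_C,
    RP_eval_b]
  have hTp : (b-a)^(r+1) ≠ 0 := pow_ne_zero _ hT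
  have hTp2 : (b-a)^r ≠ 0 := pow_ne_zero _ hT
  field_simp
  ring

lemma psiP_orth (r : ℕ) (a b : ℝ) (p : ℝ[X]) (hp : p.natDegree < r) :
    (∫ t in a..b, p.eval t * (psiP r a b).eval t) = 0 := by
  have h : ∀ t, p.eval t * (psiP r a b).eval t
      = ((-1:ℝ)^(r+1) / (2 * (r+1).factorial * (b-a)^(r+1)))
          * (p.eval t * (RP (r+1) a b).eval t)
        + ((-1:ℝ)^r / (2 * r.factorial * (b-a)^r)) * (p.eval t * (RP r a b).eval t) := by
    intro t; simp [psiP]; ring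
  rw [intervalIntegral.integral_congr (fun t _ => h t)]
  rw [intervalIntegral.integral_add
      (f := fun t => ((-1:ℝ)^(r+1) / (2 * (r+1).factorial * (b-a)^(r+1)))
          * (p.eval t * (RP (r+1) a b).eval t))
      (g := fun t => ((-1:ℝ)^r / (2 * r.factorial * (b-a)^r)) * (p.eval t * (RP r a b).eval t))
      (((continuous_const.mul (p.continuous.mul (RP (r+1) a b).continuous))).intervalIntegrable _ _)
      (((continuous_const.mul (p.continuous.mul (RP r a b).continuous))).intervalIntegrable _ _),
    intervalIntegral.integral_const_mul, intervalIntegral.integral_const_mul,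
    RP_orth _ a b p (by omega), RP_orth _ a b p (by omega)]
  simp

lemma psiP_deriv_int (r : ℕ) (hr : 1 ≤ r) (a b : ℝ) (hab : a < b) (p : ℝ[X])
    (hp : p.natDegree ≤ r) :
    (∫ t in a..b, p.eval t * (psiP r a b).derivative.eval t) = -(p.eval a) := by
  rw [polyIBP, psiP_eval_a r a b hab, psiP_eval_b r a b hab]
  have : (∫ t in a..b, p.derivative.eval t * (psiP r a b).eval t) = 0 := by
    apply psiP_orth
    have := Polynomial.natDegree_derivative_le p
    omega
  rw [this]
  ring

lemma psiP_sq_int (r : ℕ) (a b : ℝ) (hab : a < b) :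
    (∫ t in a..b, ((psiP r a b).eval t)^2)
      = (b - a) * (((r:ℝ)+1) / ((2*(r:ℝ)+1) * (2*(r:ℝ)+3))) := by
  have hT : (b - a) ≠ 0 := by linarith
  have hF1 : ((r+1).factorial : ℝ) ≠ 0 := by positivity
  have hF2 : (r.factorial : ℝ) ≠ 0 := by positivity
  have hsq : ∀ m : ℕ, ((-1:ℝ)^m)^2 = 1 := by
    intro m; rw [← pow_mul, pow_mul']; norm_num
  set c1 : ℝ := (-1:ℝ)^(r+1) / (2 * (r+1).factorial * (b-a)^(r+1)) with hc1
  set c2 : ℝ := (-1:ℝ)^r / (2 * r.factorial * (b-a)^r) with hc2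
  have hpt : ∀ t, ((psiP r a b).eval t)^2
      = c1^2 * ((RP (r+1) a b).eval t)^2 + c2^2 * ((RP r a b).eval t)^2
        + (2*c1*c2) * ((RP r a b).eval t * (RP (r+1) a b).eval t) := by
    intro t; simp only [psiP, Polynomial.eval_add, Polynomial.eval_mul, Polynomial.eval_C]
    ring
  rw [intervalIntegral.integral_congr (fun t _ => hpt t)]
  have i1 : IntervalIntegrable (fun t => c1^2 * ((RP (r+1) a b).eval t)^2) volume a b :=
    (continuous_const.mul ((RP (r+1) a b).continuous.pow 2)).intervalIntegrable _ _
  have i2 : IntervalIntegrable (fun t => c2^2 * ((RP r a b).eval t)^2) volume a b :=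
    (continuous_const.mul ((RP r a b).continuous.pow 2)).intervalIntegrable _ _
  have i3 : IntervalIntegrable
      (fun t => (2*c1*c2) * ((RP r a b).eval t * (RP (r+1) a b).eval t)) volume a b :=
    (continuous_const.mul ((RP r a b).continuous.mul
      (RP (r+1) a b).continuous)).intervalIntegrable _ _
  rw [intervalIntegral.integral_add (i1.add i2) i3, intervalIntegral.integral_add i1 i2,
    intervalIntegral.integral_const_mul, intervalIntegral.integral_const_mul,
    intervalIntegral.integral_const_mul,
    RP_sq_int (r+1) a b, RP_sq_int r a b,
    RP_orth (r+1) a b (RP r a b) (by have := RP_natDegree_le r a b; omega)]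
  have hA : (b-a)^(2*(r+1)+1) = ((b-a)^(r+1))^2 * (b-a) := by
    rw [← pow_mul, ← pow_succ]; congr 1; ring
  have hB : (b-a)^(2*r+1) = ((b-a)^r)^2 * (b-a) := by
    rw [← pow_mul, ← pow_succ]; congr 1; ring
  rw [hA, hB, hc1, hc2, div_pow, div_pow, mul_pow, mul_pow, hsq, hsq, mul_pow, mul_pow]
  have hTp1 : ((b-a)^(r+1))^2 ≠ 0 := pow_ne_zero _ (pow_ne_zero _ hT)
  have hTp2 : ((b-a)^r)^2 ≠ 0 := pow_ne_zero _ hT |> pow_ne_zero 2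
  have h1 : (2*((r+1:ℕ):ℝ)+1) = 2*(r:ℝ)+3 := by push_cast; ring
  have h2 : (2*(r:ℝ)+1) ≠ 0 := by positivity
  have h3 : (2*(r:ℝ)+3) ≠ 0 := by positivity
  rw [h1]
  field_simp
  ring

lemma psiP_unique (r : ℕ) (hr : 1 ≤ r) (a b : ℝ) (hab : a < b) (E : ℝ[X])
    (hdeg : E.natDegree ≤ r + 1) (m : ℝ) (h0 : E.eval a = -m)
    (hint : ∀ p : ℝ[X], p.natDegree ≤ r →
      (∫ t in a..b, p.eval t * E.derivative.eval t) = p.eval a * m) :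
    E = C (-m) * psiP r a b := by
  set G : ℝ[X] := E + C m * psiP r a b with hG
  have hGdeg : G.natDegree ≤ r + 1 := by
    apply le_trans (Polynomial.natDegree_add_le _ _)
    simp only [max_le_iff]
    exact ⟨hdeg, le_trans (Polynomial.natDegree_C_mul_le _ _) (psiP_natDegree_le r a b)⟩
  have hkey : ∀ p : ℝ[X], p.natDegree ≤ r →
      (∫ t in a..b, p.eval t * G.derivative.eval t) = 0 := by
    intro p hp
    have hder : G.derivative = E.derivative + C m * (psiP r a b).derivative := by
      rw [hG, Polynomial.derivative_add, Polynomial.derivative_C_mul]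
    have hsplit : (∫ t in a..b, p.eval t * G.derivative.eval t)
        = (∫ t in a..b, p.eval t * E.derivative.eval t)
          + m * ∫ t in a..b, p.eval t * (psiP r a b).derivative.eval t := by
      rw [← intervalIntegral.integral_const_mul, ← intervalIntegral.integral_add
        (f := fun t => p.eval t * E.derivative.eval t)
        (g := fun t => m * (p.eval t * (psiP r a b).derivative.eval t))
        ((p.continuous.mul E.derivative.continuous).intervalIntegrable _ _)
        ((continuous_const.mul (p.continuous.mul
          (psiP r a b).derivative.continuous)).intervalIntegrable _ _)]
      apply intervalIntegral.integral_congr; intro t _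
      rw [hder]; simp; ring
    rw [hsplit, hint p hp, psiP_deriv_int r hr a b hab p hp]
    ring
  have hGd0 : G.derivative = 0 := by
    by_contra hne
    have hzero : (∫ t in a..b, (G.derivative.eval t)^2) = 0 := by
      have := hkey G.derivative (by have := Polynomial.natDegree_derivative_le G; omega)
      rw [← this]
      apply intervalIntegral.integral_congr; intro t _; ring
    have hex : ∃ x ∈ Set.Ioo a b, G.derivative.eval x ≠ 0 := by
      by_contra hall
      push_neg at hall
      exact hne (Polynomial.eq_zero_of_infinite_isRoot _
        ((Set.infinite_coe_iff.mp (Set.Ioo.infinite hab)).mono (fun x hx => hall x hx)))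
    obtain ⟨x, hx, hxne⟩ := hex
    have hpos : 0 < ∫ t in a..b, (G.derivative.eval t)^2 := by
      apply intervalIntegral.integral_pos hab
      · exact (G.derivative.continuous.pow 2).continuousOn
      · intro t _; positivity
      · exact ⟨x, Set.mem_Icc_of_Ioo hx, by positivity⟩
    rw [hzero] at hpos; exact lt_irrefl 0 hpos
  have hGC : G = C (G.coeff 0) :=
    Polynomial.eq_C_of_natDegree_eq_zero
      (Polynomial.natDegree_eq_zero_of_derivative_eq_zero hGd0)
  have hGa : G.eval a = 0 := by
    rw [hG]; simp [psiP_eval_a r a b hab, h0]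
  have hG0 : G = 0 := by
    rw [hGC] at hGa ⊢
    simp only [Polynomial.eval_C] at hGa
    rw [hGa, map_zero]
  have : E = - (C m * psiP r a b) := by
    have := hG0; rw [hG] at this; linear_combination this
  rw [this, map_neg]
  ring


section Bridge
variable {H : Type*} [NormedAddCommGroup H] [InnerProductSpace ℝ H]

/-- Scalar polynomial of inner products of the coefficients with a fixed vector. -/
noncomputable def innerPoly (k : ℕ) (a : ℕ → H) (w : H) : ℝ[X] :=
  ∑ i ∈ Finset.range (k + 1), C (⟪a i, w⟫ : ℝ) * X ^ i

lemma innerPoly_coeff (k : ℕ) (a : ℕ → H) (w : H) (hk : ∀ i, k < i → a i = 0) (i : ℕ) :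
    (innerPoly k a w).coeff i = ⟪a i, w⟫ := by
  rw [innerPoly, Polynomial.finset_sum_coeff]
  simp only [Polynomial.coeff_C_mul, Polynomial.coeff_X_pow, mul_ite, mul_one, mul_zero]
  rw [Finset.sum_ite_eq (Finset.range (k+1)) i (fun x => (⟪a x, w⟫ : ℝ))]
  split
  · rfl
  · next h =>
    rw [Finset.mem_range, not_lt] at h
    rw [hk i (by omega)]
    simp

lemma innerPoly_eval (k : ℕ) (a : ℕ → H) (w : H) (t : ℝ) :
    (innerPoly k a w).eval t = ⟪polyEval k a t, w⟫ := by
  rw [innerPoly, polyEval, Polynomial.eval_finset_sum, sum_inner]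
  apply Finset.sum_congr rfl
  intro i _
  rw [real_inner_smul_left, Polynomial.eval_mul, Polynomial.eval_C, Polynomial.eval_pow,
    Polynomial.eval_X, mul_comm]

end Bridge

/-- L² identity for the derivative of the time reconstruction:
`∫_I ‖V' - Û'‖² = τ · c₁(q)² · ‖j‖²` with `c₁(q)² = q / ((2q-1)(2q+1))`. -/
theorem time_reconstruction_deriv_L2_identity
    {H : Type*} [NormedAddCommGroup H] [InnerProductSpace ℝ H] [CompleteSpace H]
    (t₀ t₁ : ℝ) (h01 : t₀ < t₁) (q : ℕ) (hq : 2 ≤ q)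
    (v : ℕ → H) (hv : ∀ i, q < i → v i = 0) (j : H)
    (u : ℕ → H) (hu : IsTimeRecon t₀ t₁ q v j u) :
    (∫ t in t₀..t₁, ‖polyEval (q + 1) (dC v) t - polyEval (q + 1) (dC u) t‖ ^ 2)
      = (t₁ - t₀) * ((q : ℝ) / ((2 * (q : ℝ) - 1) * (2 * (q : ℝ) + 1))) * ‖j‖ ^ 2 := by
  obtain ⟨hu1, hu2, hu3, hu4⟩ := hu
  set r := q - 1 with hrdef
  have hqr : q = r + 1 := by omega
  have hr : 1 ≤ r := by omega
  set a : ℕ → H := fun i => dC u i - dC v i with ha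
  have ha0 : ∀ i, q + 1 ≤ i → a i = 0 := by
    intro i hi
    have h1 : u (i+1) = 0 := hu1 _ (by omega)
    have h2 : v (i+1) = 0 := hv _ (by omega)
    simp [ha, dC, h1, h2]
  have ha0' : ∀ i, q + 1 < i → a i = 0 := fun i hi => ha0 i (by omega)
  have hdca0 : ∀ i, q + 1 < i → dC a i = 0 := by
    intro i hi
    rw [dC, ha0 (i+1) (by omega), smul_zero]
  have hpem : ∀ (x y : ℕ → H) (t : ℝ), polyEval (q+1) x t - polyEval (q+1) y t
      = polyEval (q+1) (fun i => x i - y i) t := by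
    intro x y t
    rw [polyEval, polyEval, polyEval, ← Finset.sum_sub_distrib]
    exact Finset.sum_congr rfl (fun i _ => (smul_sub _ _ _).symm)
  have hdCa : (fun i => dC (dC u) i - dC (dC v) i) = dC a := by
    funext i; simp [dC, ha, smul_sub]
  have he0 : polyEval (q+1) a t₀ = -j := by
    rw [← hpem, hu4]; abel
  -- the scalar polynomial identity
  have hEw : ∀ w : H, innerPoly (q+1) a w = C (-(⟪j, w⟫ : ℝ)) * psiP r t₀ t₁ := by
    intro w
    have hderiv : (innerPoly (q+1) a w).derivative = innerPoly (q+1) (dC a) w := by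
      ext i
      rw [Polynomial.coeff_derivative, innerPoly_coeff _ _ _ ha0',
        innerPoly_coeff _ _ _ hdca0, dC, real_inner_smul_left]
      ring
    apply psiP_unique r hr t₀ t₁ h01 _ ?_ (⟪j, w⟫ : ℝ) ?_ ?_
    · -- natDegree ≤ r + 1
      rw [Polynomial.natDegree_le_iff_coeff_eq_zero]
      intro m hm
      rw [innerPoly_coeff _ _ _ ha0', ha0 m (by omega), inner_zero_left]
    · rw [innerPoly_eval, he0, inner_neg_left]
    · intro p hp
      have hw : ∀ i, q ≤ i → p.coeff i • w = 0 := by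
        intro i hi
        rw [Polynomial.coeff_eq_zero_of_natDegree_lt (by omega), zero_smul]
      have hins := hu2 (fun i => p.coeff i • w) hw
      have hpe : ∀ t : ℝ, polyEval (q+1) (fun i => p.coeff i • w) t = p.eval t • w := by
        intro t
        rw [polyEval, Polynomial.eval_eq_sum_range' (n := q+1+1) (by omega) t,
          Finset.sum_smul]
        exact Finset.sum_congr rfl (fun i _ => by rw [smul_smul, mul_comm])
      have hlhs : (∫ t in t₀..t₁,
          (⟪polyEval (q + 1) (dC (dC u)) t - polyEval (q + 1) (dC (dC v)) t,
            polyEval (q + 1) (fun i => p.coeff i • w) t⟫ : ℝ))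
          = ∫ t in t₀..t₁, p.eval t * (innerPoly (q+1) a w).derivative.eval t := by
        apply intervalIntegral.integral_congr
        intro t _
        dsimp only
        rw [hpem, hdCa, hpe, real_inner_smul_right, hderiv, innerPoly_eval]
      rw [hlhs] at hins
      rw [hins, hpe, real_inner_smul_right]
  -- pointwise formula for the error
  have hptw : ∀ t : ℝ, polyEval (q+1) (dC v) t - polyEval (q+1) (dC u) t
      = ((psiP r t₀ t₁).eval t) • j := by
    intro t
    have h1 : polyEval (q+1) (dC v) t - polyEval (q+1) (dC u) t
        = -(polyEval (q+1) a t) := by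
      rw [← hpem]; abel
    rw [h1]
    apply ext_inner_right ℝ
    intro w
    have h2 := innerPoly_eval (q+1) a w t
    rw [hEw w] at h2
    simp only [Polynomial.eval_mul, Polynomial.eval_C] at h2
    rw [inner_neg_left, ← h2, real_inner_smul_left]
    ring
  have hnorm : ∀ t : ℝ, ‖polyEval (q + 1) (dC v) t - polyEval (q + 1) (dC u) t‖ ^ 2
      = ((psiP r t₀ t₁).eval t)^2 * ‖j‖^2 := by
    intro t
    rw [hptw t, norm_smul, mul_pow, Real.norm_eq_abs, sq_abs]
  rw [intervalIntegral.integral_congr (fun t _ => hnorm t),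
    intervalIntegral.integral_mul_const, psiP_sq_int r t₀ t₁ h01]
  have hc : (q : ℝ) = (r : ℝ) + 1 := by rw [hqr]; push_cast; ring
  rw [hc]
  ring_nf
end

section
/- L∞ identity for the derivative of the time reconstruction (Lemma 4.2, eq. (4.5b)): the time reconstruction Û satisfies sup_{t ∈ [t₀, t₁]} ‖V'(t) − Û'(t)‖_H = ‖j‖_H. -/
open scoped RealInnerProductSpace
open MeasureTheory

section TimeReconProof
open Polynomial intervalIntegral

noncomputable def legP : ℕ → Polynomial ℝ
  | 0 => 1
  | 1 => X
  | (n+2) => C ((2*(n:ℝ)+3)/((n:ℝ)+2)) * (X * legP (n+1)) - C (((n:ℝ)+1)/((n:ℝ)+2)) * legP n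

lemma legP_rec (n : ℕ) : C ((n:ℝ)+2) * legP (n+2)
    = C (2*(n:ℝ)+3) * (X * legP (n+1)) - C ((n:ℝ)+1) * legP n := by
  have h2 : ((n:ℝ)+2) ≠ 0 := by positivity
  show C ((n:ℝ)+2) * (C ((2*(n:ℝ)+3)/((n:ℝ)+2)) * (X * legP (n+1)) - C (((n:ℝ)+1)/((n:ℝ)+2)) * legP n) = _
  rw [mul_sub]
  congr 1
  · rw [← mul_assoc, ← C_mul, mul_div_cancel₀ _ h2]
  · rw [← mul_assoc, ← C_mul, mul_div_cancel₀ _ h2]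

lemma legP_AB (n : ℕ) :
    (derivative (legP (n+1)) = X * derivative (legP n) + C ((n:ℝ)+1) * legP n) ∧
    ((X^2 - 1) * derivative (legP (n+1)) = C ((n:ℝ)+1) * (X * legP (n+1) - legP n)) := by
  induction n with
  | zero =>
    constructor
    · show derivative (legP 1) = X * derivative (legP 0) + C ((0:ℕ)+1:ℝ) * legP 0
      norm_num [legP]
    · show (X^2-1) * derivative (legP 1) = C ((0:ℕ)+1:ℝ) * (X * legP 1 - legP 0)
      norm_num [legP]; ring
  | succ m ih =>
    obtain ⟨hA, hB⟩ := ih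
    have hcast : ((m+1:ℕ):ℝ) + 1 = (m:ℝ) + 2 := by push_cast; ring
    rw [hcast]
    have hD : X * derivative (legP (m+1)) - derivative (legP m) = C ((m:ℝ)+1) * legP (m+1) := by
      have hX : X * (X * derivative (legP (m+1)) - derivative (legP m))
          = X * (C ((m:ℝ)+1) * legP (m+1)) := by
        linear_combination hA + hB
      exact mul_left_cancel₀ X_ne_zero hX
    have hRd : C ((m:ℝ)+2) * derivative (legP (m+2))
        = C (2*(m:ℝ)+3) * (legP (m+1) + X * derivative (legP (m+1)))
          - C ((m:ℝ)+1) * derivative (legP m) := by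
      have := congrArg derivative (legP_rec m)
      simp only [derivative_mul, derivative_C, derivative_sub, derivative_X, zero_mul, zero_add,
        one_mul, mul_add] at this
      linear_combination this
    have h2 : ((m:ℝ)+2) ≠ 0 := by positivity
    have hA' : derivative (legP (m+2)) = X * derivative (legP (m+1)) + C ((m:ℝ)+2) * legP (m+1) := by
      apply Polynomial.funext; intro x
      have h1 := congrArg (eval x) hRd
      have h2' := congrArg (eval x) hD
      simp only [eval_mul, eval_add, eval_sub, eval_C, eval_X, eval_pow, eval_one] at h1 h2' ⊢
      have : ((m:ℝ)+2) * ((legP (m+2)).derivative.eval x)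
          = ((m:ℝ)+2) * (x * (legP (m+1)).derivative.eval x + ((m:ℝ)+2) * (legP (m+1)).eval x) := by
        linear_combination h1 + ((m:ℝ)+1) * h2'
      exact mul_left_cancel₀ h2 this
    refine ⟨hA', ?_⟩
    apply Polynomial.funext; intro x
    have hAx := congrArg (eval x) hA'
    have hBx := congrArg (eval x) hB
    have hRx := congrArg (eval x) (legP_rec m)
    simp only [eval_mul, eval_add, eval_sub, eval_C, eval_X, eval_pow, eval_one] at hAx hBx hRx ⊢
    have : ((m:ℝ)+2) * ((x^2-1) * (legP (m+2)).derivative.eval x)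
        = ((m:ℝ)+2) * (((m:ℝ)+2) * (x * (legP (m+2)).eval x - (legP (m+1)).eval x)) := by
      linear_combination ((m:ℝ)+2)*(x^2-1) * hAx + ((m:ℝ)+2)*x * hBx - ((m:ℝ)+2)*x * hRx
    exact mul_left_cancel₀ h2 this

lemma legP_D (n : ℕ) :
    X * derivative (legP (n+1)) - derivative (legP n) = C ((n:ℝ)+1) * legP (n+1) := by
  have hX : X * (X * derivative (legP (n+1)) - derivative (legP n))
      = X * (C ((n:ℝ)+1) * legP (n+1)) := by
    linear_combination (legP_AB n).1 + (legP_AB n).2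
  exact mul_left_cancel₀ X_ne_zero hX

/-- Legendre ODE in self-adjoint polynomial form. -/
lemma legP_ode (n : ℕ) :
    derivative ((1 - X^2) * derivative (legP n)) = C (-((n:ℝ)*((n:ℝ)+1))) * legP n := by
  match n with
  | 0 => show derivative ((1-X^2) * derivative (1:Polynomial ℝ)) = _; simp
  | (m+1) =>
    have hB := (legP_AB m).2
    have hBd := congrArg derivative hB
    simp only [derivative_mul, derivative_sub, derivative_pow, derivative_X, derivative_one,
      derivative_C, Nat.cast_ofNat, mul_one, one_mul, zero_mul, zero_add, zero_sub, pow_one] at hBd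
    have hD := legP_D m
    apply Polynomial.funext; intro x
    have h1 := congrArg (eval x) hBd
    have h2 := congrArg (eval x) hD
    simp only [eval_mul, eval_add, eval_sub, eval_neg, eval_C, eval_X, eval_pow, eval_one,
      derivative_mul, derivative_sub, derivative_one, derivative_pow, derivative_X,
      Nat.cast_ofNat, mul_one, one_mul, zero_sub, pow_one, eval_zero] at h1 h2 ⊢
    norm_num at h1 ⊢
    push_cast
    linear_combination -h1 - ((m:ℝ)+1) * h2

lemma legP_eval_one (n : ℕ) : (legP n).eval 1 = 1 := by
  induction n using Nat.strong_induction_on with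
  | _ n ih =>
    match n with
    | 0 => simp [legP]
    | 1 => simp [legP]
    | (m+2) =>
      have h := congrArg (eval (1:ℝ)) (legP_rec m)
      simp only [eval_mul, eval_sub, eval_C, eval_X, ih m (by omega), ih (m+1) (by omega),
        one_mul, mul_one] at h
      have h2 : ((m:ℝ)+2) ≠ 0 := by positivity
      have : ((m:ℝ)+2) * (legP (m+2)).eval 1 = ((m:ℝ)+2) * 1 := by rw [h]; ring
      exact mul_left_cancel₀ h2 this

lemma legP_eval_negone (n : ℕ) : (legP n).eval (-1) = (-1)^n := by
  induction n using Nat.strong_induction_on with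
  | _ n ih =>
    match n with
    | 0 => simp [legP]
    | 1 => simp [legP]
    | (m+2) =>
      have h := congrArg (eval (-1:ℝ)) (legP_rec m)
      simp only [eval_mul, eval_sub, eval_C, eval_X, ih m (by omega), ih (m+1) (by omega)] at h
      have h2 : ((m:ℝ)+2) ≠ 0 := by positivity
      have : ((m:ℝ)+2) * (legP (m+2)).eval (-1) = ((m:ℝ)+2) * (-1)^(m+2) := by
        rw [h, pow_succ, pow_succ]; ring
      exact mul_left_cancel₀ h2 this

lemma legP_energy (n : ℕ) :
    derivative (C ((n:ℝ)*((n:ℝ)+1)) * legP n ^ 2 + (1 - X^2) * (derivative (legP n))^2)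
      = C 2 * X * (derivative (legP n))^2 := by
  apply Polynomial.funext; intro x
  have h := congrArg (eval x) (legP_ode n)
  simp only [derivative_mul, derivative_add, derivative_sub, derivative_one, derivative_pow,
    derivative_C, derivative_X, eval_mul, eval_add, eval_sub, eval_neg, eval_C, eval_X,
    eval_pow, eval_one, eval_zero, zero_mul, zero_add, zero_sub, mul_one, one_mul] at h ⊢
  norm_num at h ⊢
  linear_combination (2 * eval x (derivative (legP n))) * h

lemma legP_abs_le (n : ℕ) {x : ℝ} (hx : x ∈ Set.Icc (-1:ℝ) 1) : |(legP n).eval x| ≤ 1 := by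
  rcases Nat.eq_zero_or_pos n with h0 | hn
  · subst h0; simp [legP]
  have hN : (0:ℝ) < (n:ℝ)*((n:ℝ)+1) := by
    have : (1:ℝ) ≤ (n:ℝ) := by exact_mod_cast hn
    nlinarith
  set E : Polynomial ℝ := C ((n:ℝ)*((n:ℝ)+1)) * legP n ^ 2 + (1 - X^2) * (derivative (legP n))^2 with hE
  have hderiv : ∀ y, deriv (fun t => E.eval t) y = 2 * y * ((derivative (legP n)).eval y)^2 := by
    intro y
    rw [Polynomial.deriv, legP_energy n]
    simp
  have hcont : Continuous fun t => E.eval t := E.continuous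
  have hdiff : Differentiable ℝ fun t => E.eval t := E.differentiable
  have hmono : MonotoneOn (fun t => E.eval t) (Set.Icc 0 1) := by
    apply monotoneOn_of_deriv_nonneg (convex_Icc 0 1) hcont.continuousOn
      hdiff.differentiableOn
    intro y hy
    rw [interior_Icc] at hy
    rw [hderiv]
    have : (0:ℝ) ≤ y := le_of_lt hy.1
    positivity
  have hanti : AntitoneOn (fun t => E.eval t) (Set.Icc (-1) 0) := by
    apply antitoneOn_of_deriv_nonpos (convex_Icc (-1) 0) hcont.continuousOn
      hdiff.differentiableOn
    intro y hy
    rw [interior_Icc] at hy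
    rw [hderiv]
    have hy0 : y ≤ 0 := le_of_lt hy.2
    nlinarith [sq_nonneg ((derivative (legP n)).eval y)]
  have hE1 : E.eval 1 = (n:ℝ)*((n:ℝ)+1) := by
    simp [hE, legP_eval_one]
  have hEm1 : E.eval (-1) = (n:ℝ)*((n:ℝ)+1) := by
    simp [hE, legP_eval_negone]
    rw [← pow_mul, mul_comm n 2, pow_mul]
    norm_num
  have hEle : E.eval x ≤ (n:ℝ)*((n:ℝ)+1) := by
    rcases le_or_gt 0 x with hx0 | hx0
    · have := hmono (Set.mem_Icc.mpr ⟨hx0, hx.2⟩) (Set.mem_Icc.mpr ⟨zero_le_one, le_refl 1⟩) hx.2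
      simpa [hE1] using this
    · have := hanti (Set.mem_Icc.mpr ⟨le_refl (-1:ℝ), by norm_num⟩) (Set.mem_Icc.mpr ⟨hx.1, le_of_lt hx0⟩) hx.1
      simpa [hEm1] using this
  have hlow : ((n:ℝ)*((n:ℝ)+1)) * ((legP n).eval x)^2 ≤ E.eval x := by
    have h1 : (0:ℝ) ≤ (1 - x^2) * ((derivative (legP n)).eval x)^2 := by
      have : x^2 ≤ 1 := by
        rw [sq_le_one_iff_abs_le_one, abs_le]; exact ⟨hx.1, hx.2⟩
      nlinarith [sq_nonneg ((derivative (legP n)).eval x)]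
    simp only [hE, eval_add, eval_mul, eval_sub, eval_one, eval_pow, eval_C, eval_X]
    nlinarith
  rw [← sq_le_one_iff_abs_le_one]
  nlinarith

lemma legP_natDegree (n : ℕ) : (legP n).natDegree ≤ n := by
  induction n using Nat.strong_induction_on with
  | _ n ih =>
    match n with
    | 0 => simp [legP]
    | 1 => simp [legP]
    | (m+2) =>
      show (C ((2*(m:ℝ)+3)/((m:ℝ)+2)) * (X * legP (m+1)) - C (((m:ℝ)+1)/((m:ℝ)+2)) * legP m).natDegree ≤ m+2
      apply le_trans (Polynomial.natDegree_sub_le _ _)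
      simp only [max_le_iff]
      constructor
      · apply le_trans (Polynomial.natDegree_C_mul_le _ _)
        apply le_trans (Polynomial.natDegree_mul_le)
        have := ih (m+1) (by omega)
        simp only [Polynomial.natDegree_X]
        omega
      · apply le_trans (Polynomial.natDegree_C_mul_le _ _)
        exact le_trans (ih m (by omega)) (by omega)

section shifted
variable (t₀ t₁ : ℝ) (h01 : t₀ < t₁)

noncomputable def legSig : Polynomial ℝ := C (2/(t₁-t₀)) * X - C ((t₀+t₁)/(t₁-t₀))
noncomputable def legW : Polynomial ℝ := (X - C t₀) * (C t₁ - X)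
noncomputable def legQ (n : ℕ) : Polynomial ℝ := (legP n).comp (legSig t₀ t₁)

lemma poly_FTC (p : Polynomial ℝ) :
    ∫ x in t₀..t₁, (derivative p).eval x = p.eval t₁ - p.eval t₀ :=
  intervalIntegral.integral_eq_sub_of_hasDerivAt (fun x _ => p.hasDerivAt x)
    ((derivative p).continuous.intervalIntegrable _ _)

lemma intInt (p : Polynomial ℝ) : IntervalIntegrable (fun t => p.eval t) MeasureTheory.volume t₀ t₁ :=
  p.continuous.intervalIntegrable _ _

include h01

lemma legW_eq : legW t₀ t₁ = C ((t₁-t₀)^2/4) * (((1:Polynomial ℝ) - X^2).comp (legSig t₀ t₁)) := by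
  have hτ : t₁ - t₀ ≠ 0 := sub_ne_zero.mpr h01.ne'
  apply Polynomial.funext; intro x
  simp only [legW, legSig, eval_mul, eval_sub, eval_add, eval_one, eval_pow, eval_C, eval_X, eval_comp]
  field_simp
  ring

omit h01 in
lemma legQ_deriv (n : ℕ) :
    derivative (legQ t₀ t₁ n) = C (2/(t₁-t₀)) * (derivative (legP n)).comp (legSig t₀ t₁) := by
  rw [legQ, derivative_comp]
  congr 1
  simp [legSig]

lemma legQ_ode (n : ℕ) :
    derivative (legW t₀ t₁ * derivative (legQ t₀ t₁ n)) = C (-((n:ℝ)*((n:ℝ)+1))) * legQ t₀ t₁ n := by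
  have hτ : t₁ - t₀ ≠ 0 := sub_ne_zero.mpr h01.ne'
  have key : legW t₀ t₁ * derivative (legQ t₀ t₁ n)
      = C ((t₁-t₀)/2) * ((1 - X^2) * derivative (legP n)).comp (legSig t₀ t₁) := by
    rw [legQ_deriv, legW_eq t₀ t₁ h01]
    apply Polynomial.funext; intro x
    simp only [eval_mul, eval_sub, eval_add, eval_one, eval_pow, eval_C, eval_X, eval_comp]
    field_simp
    ring
  rw [key, derivative_mul, derivative_C, zero_mul, zero_add, derivative_comp, legP_ode, mul_comp, C_comp]
  have hσ : derivative (legSig t₀ t₁) = C (2/(t₁-t₀)) := by simp [legSig]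
  rw [hσ]
  have : C ((t₁-t₀)/2) * (C (2/(t₁-t₀)) * (C (-((n:ℝ)*((n:ℝ)+1))) * (legP n).comp (legSig t₀ t₁)))
      = (C ((t₁-t₀)/2) * C (2/(t₁-t₀))) * C (-((n:ℝ)*((n:ℝ)+1))) * (legP n).comp (legSig t₀ t₁) := by ring
  rw [this, ← C_mul]
  have h2 : (t₁-t₀)/2 * (2/(t₁-t₀)) = 1 := by field_simp
  rw [h2, C_1, one_mul, legQ]

omit h01 in
lemma green (A B : Polynomial ℝ) :
    ∫ t in t₀..t₁, (derivative (legW t₀ t₁ * derivative B) * A).eval t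
      = ∫ t in t₀..t₁, (derivative (legW t₀ t₁ * derivative A) * B).eval t := by
  set w := legW t₀ t₁ with hw
  have hid : derivative (w * (derivative A * B - derivative B * A))
      = derivative (w * derivative A) * B - derivative (w * derivative B) * A := by
    simp only [derivative_mul, derivative_sub]
    ring
  have hFTC := poly_FTC t₀ t₁ (w * (derivative A * B - derivative B * A))
  rw [hid] at hFTC
  have hw0 : w.eval t₀ = 0 := by simp [hw, legW]
  have hw1 : w.eval t₁ = 0 := by simp [hw, legW]
  have hz : (∫ t in t₀..t₁, ((derivative (w * derivative A) * B).eval t - (derivative (w * derivative B) * A).eval t)) = 0 := by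
    have : (fun t => (derivative (w * derivative A) * B - derivative (w * derivative B) * A).eval t)
        = fun t => (derivative (w * derivative A) * B).eval t - (derivative (w * derivative B) * A).eval t := by
      funext t; simp
    rw [← this, hFTC]
    simp [eval_mul, hw0, hw1]
  rw [intervalIntegral.integral_sub (intInt _ _ _) (intInt _ _ _)] at hz
  linarith
end shifted

lemma X_mul_derivative_X_pow (m : ℕ) :
    X * derivative (X^m : Polynomial ℝ) = C (m:ℝ) * X^m := by
  cases m with
  | zero => simp
  | succ k =>
    rw [derivative_X_pow]
    push_cast
    ring

section orth
variable (t₀ t₁ : ℝ) (h01 : t₀ < t₁)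

lemma wXpow_identity (m : ℕ) :
    derivative (legW t₀ t₁ * derivative (X^(m+1) : Polynomial ℝ))
      = C (-(((m:ℝ)+1)*((m:ℝ)+2))) * X^(m+1)
        + (C (((m:ℝ)+1)^2*(t₀+t₁)) * X^m - C (((m:ℝ)+1)*(t₀*t₁)) * derivative (X^m : Polynomial ℝ)) := by
  have hXD := X_mul_derivative_X_pow m
  rw [derivative_X_pow]
  push_cast
  simp only [legW, derivative_mul, derivative_sub, derivative_C, derivative_X, derivative_one,
    map_neg, map_mul, map_add, map_ofNat, map_one, map_pow, sub_zero, zero_sub, one_mul, mul_one]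
  linear_combination (-((C (m:ℝ) + 1) * (X - C t₀ - C t₁))) * hXD

lemma s_coeff_vanish (m : ℕ) (i : ℕ) (hi : m+1 ≤ i) :
    (C (((m:ℝ)+1)^2*(t₀+t₁)) * X^m - C (((m:ℝ)+1)*(t₀*t₁)) * derivative (X^m : Polynomial ℝ)).coeff i = 0 := by
  rw [coeff_sub, coeff_C_mul, coeff_C_mul, coeff_X_pow, coeff_derivative, coeff_X_pow]
  have h1 : i ≠ m := by omega
  have h2 : i + 1 ≠ m := by omega
  simp [h1, h2]

include h01 in
lemma legQ_orth (n : ℕ) : ∀ k, k ≤ n → ∀ r : Polynomial ℝ, (∀ i, k ≤ i → r.coeff i = 0) →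
    (∫ t in t₀..t₁, (legQ t₀ t₁ n * r).eval t) = 0 := by
  intro k
  induction k with
  | zero =>
    intro _ r hr
    have : r = 0 := by
      ext i; exact hr i (Nat.zero_le i)
    simp [this]
  | succ m ih =>
    intro hkn r hr
    have hsplit : r = (r - C (r.coeff m) * X^m) + C (r.coeff m) * X^m := by ring
    have hr₀ : ∀ i, m ≤ i → (r - C (r.coeff m) * X^m).coeff i = 0 := by
      intro i hi
      rw [coeff_sub, coeff_C_mul, coeff_X_pow]
      rcases eq_or_lt_of_le hi with h | h
      · simp [← h]
      · rw [hr i (by omega), if_neg (by omega)]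
        simp
    have hNk : ((m:ℝ)*((m:ℝ)+1)) - ((n:ℝ)*((n:ℝ)+1)) ≠ 0 := by
      have hmn : (m:ℝ) < (n:ℝ) := by exact_mod_cast hkn
      have hm0 : (0:ℝ) ≤ (m:ℝ) := Nat.cast_nonneg m
      nlinarith
    have hTm : (∫ t in t₀..t₁, (legQ t₀ t₁ n * X^m).eval t) = 0 := by
      have hg := green t₀ t₁ (legQ t₀ t₁ n) (X^m)
      have hrhs : (∫ t in t₀..t₁, (derivative (legW t₀ t₁ * derivative (legQ t₀ t₁ n)) * (X ^ m : Polynomial ℝ)).eval t)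
          = -((n:ℝ)*((n:ℝ)+1)) * ∫ t in t₀..t₁, (legQ t₀ t₁ n * X^m).eval t := by
        rw [legQ_ode t₀ t₁ h01 n, ← intervalIntegral.integral_const_mul]
        have hfun : (fun t => ((C (-((n:ℝ)*((n:ℝ)+1))) * legQ t₀ t₁ n * X^m).eval t))
            = fun t => -((n:ℝ)*((n:ℝ)+1)) * (legQ t₀ t₁ n * X^m).eval t := by
          funext t; simp; ring
        rw [hfun]
      rw [hrhs] at hg
      have hlhs : (∫ t in t₀..t₁, (derivative (legW t₀ t₁ * derivative (X^m : Polynomial ℝ)) * legQ t₀ t₁ n).eval t)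
          = -((m:ℝ)*((m:ℝ)+1)) * ∫ t in t₀..t₁, (legQ t₀ t₁ n * X^m).eval t := by
        rcases Nat.eq_zero_or_pos m with hm0 | hmpos
        · subst hm0
          simp
        · obtain ⟨m', rfl⟩ : ∃ m', m = m' + 1 := ⟨m - 1, by omega⟩
          rw [wXpow_identity t₀ t₁ m']
          have hsz := ih (by omega) (C (((m':ℝ)+1)^2*(t₀+t₁)) * X^m' - C (((m':ℝ)+1)*(t₀*t₁)) * derivative (X^m' : Polynomial ℝ))
            (fun i hi => s_coeff_vanish t₀ t₁ m' i hi)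
          have hfun : (fun t => (((C (-(((m':ℝ)+1)*((m':ℝ)+2))) * X^(m'+1)
              + (C (((m':ℝ)+1)^2*(t₀+t₁)) * X^m' - C (((m':ℝ)+1)*(t₀*t₁)) * derivative (X^m' : Polynomial ℝ))) * legQ t₀ t₁ n).eval t))
            = fun t => -(((m':ℝ)+1)*((m':ℝ)+2)) * (legQ t₀ t₁ n * X^(m'+1)).eval t
              + (legQ t₀ t₁ n * (C (((m':ℝ)+1)^2*(t₀+t₁)) * X^m' - C (((m':ℝ)+1)*(t₀*t₁)) * derivative (X^m' : Polynomial ℝ))).eval t := by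
            funext t; simp; ring
          rw [hfun, intervalIntegral.integral_add
              ((intInt t₀ t₁ (legQ t₀ t₁ n * X^(m'+1))).const_mul _)
              (intInt t₀ t₁ _), hsz, add_zero, intervalIntegral.integral_const_mul]
          push_cast
          ring_nf
      rw [hlhs] at hg
      have hzero : (((m:ℝ)*((m:ℝ)+1)) - ((n:ℝ)*((n:ℝ)+1))) * (∫ t in t₀..t₁, (legQ t₀ t₁ n * X^m).eval t) = 0 := by
        linear_combination -hg
      rcases mul_eq_zero.mp hzero with h | h
      · exact absurd h hNk
      · exact h
    have hq : legQ t₀ t₁ n * r = legQ t₀ t₁ n * (r - C (r.coeff m) * X^m) + C (r.coeff m) * (legQ t₀ t₁ n * X^m) := by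
      ring
    have hfun : (fun t => (legQ t₀ t₁ n * r).eval t)
        = fun t => (legQ t₀ t₁ n * (r - C (r.coeff m) * X^m)).eval t + r.coeff m * (legQ t₀ t₁ n * X^m).eval t := by
      funext t
      rw [hq]
      simp
    rw [hfun, intervalIntegral.integral_add (intInt t₀ t₁ _)
        ((intInt t₀ t₁ (legQ t₀ t₁ n * X^m)).const_mul _),
      ih (by omega) _ hr₀, zero_add, intervalIntegral.integral_const_mul, hTm, mul_zero]
end orth

section L
variable (t₀ t₁ : ℝ) (h01 : t₀ < t₁) (q : ℕ) (hq : 2 ≤ q)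

noncomputable def legL : Polynomial ℝ := C ((-1:ℝ)^q/2) * (legQ t₀ t₁ q - legQ t₀ t₁ (q-1))

include h01 in
lemma sig_eval_t₀ : (legSig t₀ t₁).eval t₀ = -1 := by
  have hτ : t₁ - t₀ ≠ 0 := sub_ne_zero.mpr h01.ne'
  simp only [legSig, eval_sub, eval_mul, eval_C, eval_X]
  field_simp
  ring

include h01 in
lemma sig_eval_t₁ : (legSig t₀ t₁).eval t₁ = 1 := by
  have hτ : t₁ - t₀ ≠ 0 := sub_ne_zero.mpr h01.ne'
  simp only [legSig, eval_sub, eval_mul, eval_C, eval_X]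
  field_simp
  ring

include h01 in
lemma sig_mem {t : ℝ} (ht : t ∈ Set.Icc t₀ t₁) : (legSig t₀ t₁).eval t ∈ Set.Icc (-1:ℝ) 1 := by
  have hτ : (0:ℝ) < t₁ - t₀ := sub_pos.mpr h01
  simp only [legSig, eval_sub, eval_mul, eval_C, eval_X]
  constructor
  · rw [div_mul_eq_mul_div, div_sub_div_same, le_div_iff₀ hτ]
    nlinarith [ht.1]
  · rw [div_mul_eq_mul_div, div_sub_div_same, div_le_iff₀ hτ]
    nlinarith [ht.2]

include h01 hq in
lemma legL_eval_t₀ : (legL t₀ t₁ q).eval t₀ = 1 := by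
  obtain ⟨m, rfl⟩ : ∃ m, q = m + 1 := ⟨q - 1, by omega⟩
  simp only [legL, legQ, eval_mul, eval_sub, eval_C, eval_comp, sig_eval_t₀ t₀ t₁ h01,
    legP_eval_negone, Nat.add_sub_cancel]
  rw [pow_succ]
  ring_nf
  rw [mul_comm m 2, pow_mul]
  norm_num

include h01 in
lemma legL_eval_t₁ : (legL t₀ t₁ q).eval t₁ = 0 := by
  simp [legL, legQ, eval_comp, sig_eval_t₁ t₀ t₁ h01, legP_eval_one]

include h01 in
lemma legL_abs_le {t : ℝ} (ht : t ∈ Set.Icc t₀ t₁) : |(legL t₀ t₁ q).eval t| ≤ 1 := by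
  have h1 := legP_abs_le q (sig_mem t₀ t₁ h01 ht)
  have h2 := legP_abs_le (q-1) (sig_mem t₀ t₁ h01 ht)
  simp only [legL, legQ, eval_mul, eval_sub, eval_C, eval_comp]
  rw [abs_mul, abs_div]
  calc |(-1:ℝ)^q|/|(2:ℝ)| * |(legP q).eval ((legSig t₀ t₁).eval t) - (legP (q-1)).eval ((legSig t₀ t₁).eval t)|
      ≤ 1/2 * (|(legP q).eval ((legSig t₀ t₁).eval t)| + |(legP (q-1)).eval ((legSig t₀ t₁).eval t)|) := by
        rw [abs_pow, abs_neg, abs_one, one_pow]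
        gcongr
        · norm_num
        · exact abs_sub _ _
    _ ≤ 1/2 * (1 + 1) := by gcongr
    _ = 1 := by norm_num

lemma legSig_natDegree : (legSig t₀ t₁).natDegree ≤ 1 := by
  apply le_trans (natDegree_sub_le _ _)
  simp only [max_le_iff]
  constructor
  · exact le_trans (natDegree_C_mul_le _ _) (by simp)
  · simp

lemma legQ_natDegree (n : ℕ) : (legQ t₀ t₁ n).natDegree ≤ n := by
  apply le_trans (natDegree_comp_le)
  calc (legP n).natDegree * (legSig t₀ t₁).natDegree ≤ n * 1 :=
        Nat.mul_le_mul (legP_natDegree n) (legSig_natDegree t₀ t₁)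
    _ = n := by omega

lemma legL_natDegree : (legL t₀ t₁ q).natDegree ≤ q := by
  apply le_trans (natDegree_C_mul_le _ _)
  apply le_trans (natDegree_sub_le _ _)
  simp only [max_le_iff]
  exact ⟨legQ_natDegree t₀ t₁ q, le_trans (legQ_natDegree t₀ t₁ (q-1)) (by omega)⟩

lemma dlegL_coeff (i : ℕ) (hi : q ≤ i) : (derivative (legL t₀ t₁ q)).coeff i = 0 := by
  rw [coeff_derivative]
  have : (legL t₀ t₁ q).coeff (i+1) = 0 := by
    apply coeff_eq_zero_of_natDegree_lt
    exact lt_of_le_of_lt (legL_natDegree t₀ t₁ q) (by omega)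
  simp [this]

include h01 hq in
lemma dlegL_repro (p : Polynomial ℝ) (hp : ∀ i, q ≤ i → p.coeff i = 0) :
    (∫ t in t₀..t₁, (derivative (legL t₀ t₁ q) * p).eval t) = -(p.eval t₀) := by
  have hdp : ∀ i, q - 1 ≤ i → (derivative p).coeff i = 0 := by
    intro i hi
    rw [coeff_derivative, hp (i+1) (by omega)]
    simp
  have hQq : (∫ t in t₀..t₁, (legQ t₀ t₁ q * derivative p).eval t) = 0 :=
    legQ_orth t₀ t₁ h01 q (q-1) (by omega) _ hdp
  have hQq1 : (∫ t in t₀..t₁, (legQ t₀ t₁ (q-1) * derivative p).eval t) = 0 :=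
    legQ_orth t₀ t₁ h01 (q-1) (q-1) le_rfl _ hdp
  have hLdp : (∫ t in t₀..t₁, (legL t₀ t₁ q * derivative p).eval t) = 0 := by
    have hfun : (fun t => (legL t₀ t₁ q * derivative p).eval t)
        = fun t => ((-1:ℝ)^q/2) * ((legQ t₀ t₁ q * derivative p).eval t - (legQ t₀ t₁ (q-1) * derivative p).eval t) := by
      funext t; simp [legL]; ring
    rw [hfun, intervalIntegral.integral_const_mul,
      intervalIntegral.integral_sub (intInt t₀ t₁ _) (intInt t₀ t₁ _), hQq, hQq1]
    simp
  have hFTC := poly_FTC t₀ t₁ (legL t₀ t₁ q * p)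
  rw [show eval t₁ (legL t₀ t₁ q * p) = 0 from by
      rw [eval_mul, legL_eval_t₁ t₀ t₁ h01 q, zero_mul],
    show eval t₀ (legL t₀ t₁ q * p) = eval t₀ p from by
      rw [eval_mul, legL_eval_t₀ t₀ t₁ h01 q hq, one_mul], zero_sub] at hFTC
  have hfun2 : (fun x => (derivative (legL t₀ t₁ q * p)).eval x)
      = fun t => (derivative (legL t₀ t₁ q) * p).eval t + (legL t₀ t₁ q * derivative p).eval t := by
    funext t; rw [derivative_mul]; simp
  rw [hfun2, intervalIntegral.integral_add (intInt t₀ t₁ _) (intInt t₀ t₁ _), hLdp, add_zero] at hFTC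
  exact hFTC

include h01 in
lemma poly_sq_int_zero (h : Polynomial ℝ)
    (hint : (∫ t in t₀..t₁, (h*h).eval t) = 0) : h = 0 := by
  by_contra hne
  have hroots : {x : ℝ | h.IsRoot x}.Finite := Polynomial.finite_setOf_isRoot hne
  set f : ℝ → ℝ := fun t => (h.eval t)^2 with hf
  have hfeq : (fun t => (h*h).eval t) = f := by funext t; simp [hf, sq]
  have hfi : IntervalIntegrable f MeasureTheory.volume t₀ t₁ := by
    rw [← hfeq]; exact intInt t₀ t₁ _
  have hnonneg : 0 ≤ᵐ[MeasureTheory.volume] f := .of_forall fun t => sq_nonneg _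
  have hsupp : Set.Ioc t₀ t₁ \ {x : ℝ | h.IsRoot x} ⊆ Function.support f ∩ Set.Ioc t₀ t₁ := by
    intro x hx
    refine ⟨?_, hx.1⟩
    simp only [Function.mem_support, hf]
    intro hc
    exact hx.2 (by simpa [Polynomial.IsRoot] using pow_eq_zero_iff (n := 2) (by norm_num) |>.mp hc)
  have hvol : 0 < MeasureTheory.volume (Function.support f ∩ Set.Ioc t₀ t₁) := by
    apply lt_of_lt_of_le _ (MeasureTheory.measure_mono hsupp)
    rw [MeasureTheory.measure_diff_null (hroots.measure_zero _)]
    simp [h01]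
  have hpos : 0 < ∫ t in t₀..t₁, f t :=
    (intervalIntegral.integral_pos_iff_support_of_nonneg_ae hnonneg hfi).mpr ⟨h01, hvol⟩
  rw [← hfeq] at hpos
  rw [hint] at hpos
  exact lt_irrefl 0 hpos

include h01 hq in
/-- Uniqueness: any polynomial of "degree < q" that weakly represents `a·δ_{t₀}` equals
`-a • L'`. -/
lemma repro_unique (g : Polynomial ℝ) (a : ℝ)
    (hg : ∀ i, q ≤ i → g.coeff i = 0)
    (hrep : ∀ p : Polynomial ℝ, (∀ i, q ≤ i → p.coeff i = 0) →
      (∫ t in t₀..t₁, (g * p).eval t) = a * p.eval t₀) :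
    g = C (-a) * derivative (legL t₀ t₁ q) := by
  set h : Polynomial ℝ := g + C a * derivative (legL t₀ t₁ q) with hh
  have hhc : ∀ i, q ≤ i → h.coeff i = 0 := by
    intro i hi
    rw [hh, coeff_add, coeff_C_mul, hg i hi, dlegL_coeff t₀ t₁ q i hi]
    simp
  have hzero : (∫ t in t₀..t₁, (h*h).eval t) = 0 := by
    have hfun : (fun t => (h*h).eval t)
        = fun t => (g * h).eval t + a * (derivative (legL t₀ t₁ q) * h).eval t := by
      funext t
      rw [show h * h = g * h + C a * (derivative (legL t₀ t₁ q) * h) from by rw [hh]; ring]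
      simp
    rw [hfun, intervalIntegral.integral_add (intInt t₀ t₁ _)
        ((intInt t₀ t₁ (derivative (legL t₀ t₁ q) * h)).const_mul _),
      intervalIntegral.integral_const_mul, hrep h hhc, dlegL_repro t₀ t₁ h01 q hq h hhc]
    ring
  have h0 : h = 0 := poly_sq_int_zero t₀ t₁ h01 h hzero
  have := congrArg (fun p => p - C a * derivative (legL t₀ t₁ q)) h0
  simp only [hh] at this
  rw [show g + C a * derivative (legL t₀ t₁ q) - C a * derivative (legL t₀ t₁ q) = g from by ring] at this
  rw [this, map_neg]
  ring
end L

/-- L∞ identity for the derivative of the time reconstruction: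
`sup_{t ∈ [t₀,t₁]} ‖V'(t) - Û'(t)‖ = ‖j‖`. -/
theorem time_reconstruction_deriv_Linfty_identity
    {H : Type*} [NormedAddCommGroup H] [InnerProductSpace ℝ H] [CompleteSpace H]
    (t₀ t₁ : ℝ) (h01 : t₀ < t₁) (q : ℕ) (hq : 2 ≤ q)
    (v : ℕ → H) (hv : ∀ i, q < i → v i = 0) (j : H)
    (u : ℕ → H) (hu : IsTimeRecon t₀ t₁ q v j u) :
    (⨆ t : Set.Icc t₀ t₁, ‖polyEval (q + 1) (dC v) t - polyEval (q + 1) (dC u) t‖) = ‖j‖ := by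
  obtain ⟨hu0, hw, hu2, hu3⟩ := hu
  -- the coefficients of Û'' - V''
  set d : ℕ → H := fun i => dC (dC u) i - dC (dC v) i with hd
  have hd0 : ∀ i, q ≤ i → d i = 0 := by
    intro i hi
    have h1 : u (i+1+1) = 0 := hu0 _ (by omega)
    have h2 : v (i+1+1) = 0 := hv _ (by omega)
    simp [hd, dC, h1, h2]
  have hDfun : ∀ t : ℝ, polyEval (q + 1) (dC (dC u)) t - polyEval (q + 1) (dC (dC v)) t
      = ∑ i ∈ Finset.range (q + 2), t ^ i • d i := by
    intro t
    simp only [polyEval, hd, ← Finset.sum_sub_distrib, smul_sub]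
  -- scalar polynomial ⟪D(·), e⟫
  have key : ∀ e : H, (∑ i ∈ Finset.range (q+2), C ⟪d i, e⟫ * X^i : Polynomial ℝ)
      = C (-⟪j, e⟫) * derivative (legL t₀ t₁ q) := by
    intro e
    set G : Polynomial ℝ := ∑ i ∈ Finset.range (q+2), C ⟪d i, e⟫ * X^i with hG
    have hGcoeff : ∀ k, G.coeff k = if k < q+2 then ⟪d k, e⟫ else 0 := by
      intro k
      rw [hG, finset_sum_coeff]
      simp only [coeff_C_mul, coeff_X_pow, mul_ite, mul_one, mul_zero]
      rw [Finset.sum_ite_eq (Finset.range (q+2)) k (fun i => ⟪d i, e⟫)]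
      simp [Finset.mem_range]
    have hGev : ∀ t : ℝ, G.eval t = ⟪∑ i ∈ Finset.range (q + 2), t ^ i • d i, e⟫ := by
      intro t
      rw [hG, sum_inner]
      rw [Polynomial.eval_finset_sum]
      congr 1
      funext i
      rw [real_inner_smul_left]
      simp only [eval_mul, eval_C, eval_pow, eval_X]
      ring
    apply repro_unique t₀ t₁ h01 q hq G ⟪j, e⟫
    · intro i hi
      rw [hGcoeff i]
      rcases lt_or_ge i (q+2) with h2 | h2
      · rw [if_pos h2, hd0 i hi, inner_zero_left]
      · rw [if_neg (by omega)]
    · intro p hp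
      have hpdeg : p.natDegree < q + 2 := by
        rcases eq_or_ne p 0 with rfl | hp0
        · simp
        · have : p.natDegree ≤ q := natDegree_le_iff_coeff_eq_zero.mpr
            (fun N hN => hp N (le_of_lt hN))
          omega
      set wtest : ℕ → H := fun i => p.coeff i • e with hwt
      have hwz : ∀ i, q ≤ i → wtest i = 0 := by
        intro i hi; simp [hwt, hp i hi]
      have hcond := hw wtest hwz
      have hwev : ∀ t : ℝ, polyEval (q+1) wtest t = p.eval t • e := by
        intro t
        rw [polyEval, Polynomial.eval_eq_sum_range' hpdeg]
        rw [Finset.sum_smul]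
        congr 1
        funext i
        rw [hwt, smul_smul, mul_comm]
      have hfun : (fun t => ⟪polyEval (q + 1) (dC (dC u)) t - polyEval (q + 1) (dC (dC v)) t,
          polyEval (q + 1) wtest t⟫) = fun t => (G * p).eval t := by
        funext t
        rw [hDfun t, hwev t, real_inner_smul_right, eval_mul, hGev t]
        ring
      rw [hfun] at hcond
      rw [hcond, hwev t₀, real_inner_smul_right]
      ring
  -- coefficient identity for d
  have hdco : ∀ i, d i = (-(derivative (legL t₀ t₁ q)).coeff i) • j := by
    intro i
    rcases lt_or_ge i (q+2) with hi | hi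
    · have : ∀ e : H, ⟪d i - (-(derivative (legL t₀ t₁ q)).coeff i) • j, e⟫ = 0 := by
        intro e
        have hco := congrArg (fun p : Polynomial ℝ => p.coeff i) (key e)
        simp only [finset_sum_coeff, coeff_C_mul, coeff_X_pow, mul_ite, mul_one, mul_zero] at hco
        rw [Finset.sum_ite_eq (Finset.range (q+2)) i (fun k => ⟪d k, e⟫)] at hco
        rw [if_pos (Finset.mem_range.mpr hi)] at hco
        rw [inner_sub_left, real_inner_smul_left, hco]
        ring
      have := this (d i - (-(derivative (legL t₀ t₁ q)).coeff i) • j)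
      rw [inner_self_eq_zero] at this
      exact sub_eq_zero.mp this
    · rw [hd0 i (by omega), dlegL_coeff t₀ t₁ q i (by omega)]
      simp
  -- coefficients of V' - Û'
  set c : ℕ → H := fun i => dC v i - dC u i with hc
  have hc1 : ∀ m : ℕ, c (m+1) = (legL t₀ t₁ q).coeff (m+1) • j := by
    intro m
    have hdm := hdco m
    have hm1 : ((m:ℝ)+1) ≠ 0 := by positivity
    have hdc' : d m = -(((m:ℝ)+1)) • c (m+1) := by
      simp only [hd, hc, dC]
      push_cast
      module
    rw [hdc'] at hdm
    have hco : (derivative (legL t₀ t₁ q)).coeff m = (legL t₀ t₁ q).coeff (m+1) * ((m:ℝ)+1) :=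
      coeff_derivative _ m
    rw [hco] at hdm
    have hgoal : (-((m:ℝ)+1)) • c (m+1) = (-((m:ℝ)+1)) • ((legL t₀ t₁ q).coeff (m+1) • j) := by
      rw [hdm, smul_smul]
      congr 1
      ring
    exact smul_right_injective H (neg_ne_zero.mpr hm1) hgoal
  have hclegL : ∀ i, c i = (legL t₀ t₁ q).coeff i • j := by
    intro i
    rcases Nat.eq_zero_or_pos i with rfl | hipos
    · have hjf : ∑ i ∈ Finset.range (q + 2), t₀ ^ i • c i = j := by
        have h5 : polyEval (q+1) (dC v) t₀ - polyEval (q+1) (dC u) t₀ = j := by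
          rw [hu3]; abel
        rw [← h5]
        simp only [polyEval, hc, ← Finset.sum_sub_distrib, smul_sub]
      have hLev : ∑ i ∈ Finset.range (q + 2), (legL t₀ t₁ q).coeff i * t₀ ^ i = 1 := by
        rw [← Polynomial.eval_eq_sum_range' (by have := legL_natDegree t₀ t₁ q; omega) t₀]
        exact legL_eval_t₀ t₀ t₁ h01 q hq
      rw [Finset.sum_range_succ' (fun i => t₀ ^ i • c i) (q+1)] at hjf
      rw [Finset.sum_range_succ' (fun i => (legL t₀ t₁ q).coeff i * t₀ ^ i) (q+1)] at hLev
      simp only [pow_zero, one_smul, mul_one] at hjf hLev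
      have hsum2 : ∑ i ∈ Finset.range (q+1), t₀^(i+1) • c (i+1)
          = (∑ i ∈ Finset.range (q+1), (legL t₀ t₁ q).coeff (i+1) * t₀^(i+1)) • j := by
        rw [Finset.sum_smul]
        congr 1
        funext i
        rw [hc1 i, smul_smul, mul_comm]
      rw [hsum2] at hjf
      have hS : (∑ i ∈ Finset.range (q+1), (legL t₀ t₁ q).coeff (i+1) * t₀^(i+1))
          = 1 - (legL t₀ t₁ q).coeff 0 := by linarith
      rw [hS] at hjf
      have h6 : c 0 = j - (1 - (legL t₀ t₁ q).coeff 0) • j := eq_sub_of_add_eq' hjf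
      rw [h6, sub_smul, one_smul]
      abel
    · obtain ⟨m, rfl⟩ : ∃ m, i = m + 1 := ⟨i - 1, by omega⟩
      exact hc1 m
  -- the function V' - Û' equals (eval of legL) • j
  have hfval : ∀ t : ℝ, polyEval (q + 1) (dC v) t - polyEval (q + 1) (dC u) t
      = (legL t₀ t₁ q).eval t • j := by
    intro t
    have h1 : polyEval (q + 1) (dC v) t - polyEval (q + 1) (dC u) t
        = ∑ i ∈ Finset.range (q + 2), t ^ i • c i := by
      simp only [polyEval, hc, ← Finset.sum_sub_distrib, smul_sub]
    rw [h1]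
    rw [Polynomial.eval_eq_sum_range' (n := q+2) (by have := legL_natDegree t₀ t₁ q; omega) t]
    rw [Finset.sum_smul]
    congr 1
    funext i
    rw [hclegL i, smul_smul, mul_comm]
  -- conclude
  have hnorm : ∀ t : ℝ, ‖polyEval (q + 1) (dC v) t - polyEval (q + 1) (dC u) t‖
      = |(legL t₀ t₁ q).eval t| * ‖j‖ := by
    intro t
    rw [hfval t, norm_smul, Real.norm_eq_abs]
  have hne : Nonempty (Set.Icc t₀ t₁) := ⟨⟨t₀, Set.left_mem_Icc.mpr h01.le⟩⟩
  apply le_antisymm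
  · apply ciSup_le
    intro t
    show ‖polyEval (q + 1) (dC v) (t:ℝ) - polyEval (q + 1) (dC u) (t:ℝ)‖ ≤ ‖j‖
    rw [hnorm (t:ℝ)]
    calc |(legL t₀ t₁ q).eval (t:ℝ)| * ‖j‖ ≤ 1 * ‖j‖ := by
          gcongr
          exact legL_abs_le t₀ t₁ h01 q t.2
      _ = ‖j‖ := one_mul _
  · have hb : BddAbove (Set.range fun t : Set.Icc t₀ t₁ =>
        ‖polyEval (q + 1) (dC v) t - polyEval (q + 1) (dC u) t‖) := by
      refine ⟨‖j‖, ?_⟩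
      rintro x ⟨t, rfl⟩
      show ‖polyEval (q + 1) (dC v) (t:ℝ) - polyEval (q + 1) (dC u) (t:ℝ)‖ ≤ ‖j‖
      rw [hnorm (t:ℝ)]
      calc |(legL t₀ t₁ q).eval (t:ℝ)| * ‖j‖ ≤ 1 * ‖j‖ := by
            gcongr
            exact legL_abs_le t₀ t₁ h01 q t.2
        _ = ‖j‖ := one_mul _
    have := le_ciSup hb (⟨t₀, Set.left_mem_Icc.mpr h01.le⟩ : Set.Icc t₀ t₁)
    rw [hnorm t₀, legL_eval_t₀ t₀ t₁ h01 q hq] at this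
    simpa using this

end TimeReconProof
end
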